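/- arXiv:2401.06364 — 9 statements merged into one kernel-verified Lean document; each statement's English description precedes it below -/
import Mathlib

section
/- Let f : ℂⁿ ⇢ ℂᴺ be a rational map whose restriction to the open unit ball 𝔹ₙ is a proper holomorphic map into 𝔹ᴺ (i.e., f is holomorphic on 𝔹ₙ, maps 𝔹ₙ into 𝔹ᴺ, and extends to map the unit sphere S^{2n-1} into S^{2N-1}). Then for every point z with ‖z‖ > 1 that is not a pole of f, one has ‖f(z)‖ > 1. -/
open MvPolynomial Metric

/-- Evaluation of a vector-valued polynomial map. -/
noncomputable def evalPoly {n N : ℕ} (P : Fin N → MvPolynomial (Fin n) ℂ)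
    (z : EuclideanSpace ℂ (Fin n)) : EuclideanSpace ℂ (Fin N) :=
  WithLp.toLp 2 (fun i => MvPolynomial.eval (fun j => z j) (P i))

/-- The rational map `p/q`. -/
noncomputable def ratMap {n N : ℕ} (P : Fin N → MvPolynomial (Fin n) ℂ)
    (q : MvPolynomial (Fin n) ℂ) (z : EuclideanSpace ℂ (Fin n)) :
    EuclideanSpace ℂ (Fin N) :=
  (MvPolynomial.eval (fun j => z j) q)⁻¹ • evalPoly P z

open Polynomial in
lemma my_eval_reflect {K : Type*} [Field K] (d : ℕ) (f : K[X]) (hf : f.natDegree ≤ d)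
    {x : K} (hx : x ≠ 0) : (reflect d f).eval x = x ^ d * f.eval x⁻¹ := by
  have hinv : Invertible x⁻¹ := invertibleOfNonzero (inv_ne_zero hx)
  have h := Polynomial.eval₂_reflect_mul_pow (RingHom.id K) x⁻¹ d f hf
  rw [invOf_eq_inv, inv_inv] at h
  simp only [Polynomial.eval₂_eq_eval_map, Polynomial.map_id] at h
  rw [← h, inv_pow, mul_left_comm, mul_inv_cancel₀ (pow_ne_zero d hx), mul_one]

open Polynomial in
lemma my_eval_conj_map (f : Polynomial ℂ) (μ : ℂ) :
    (f.map (starRingEnd ℂ)).eval μ = (starRingEnd ℂ) (f.eval ((starRingEnd ℂ) μ)) := by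
  conv_lhs => rw [show μ = (starRingEnd ℂ) ((starRingEnd ℂ) μ) by simp]
  rw [Polynomial.eval_map, Polynomial.eval₂_at_apply]

lemma my_circle_infinite : {x : ℂ | ‖x‖ = 1}.Infinite := by
  have hsub : (fun t : ℝ => (⟨t, Real.sqrt (1 - t^2)⟩ : ℂ)) '' (Set.Ioo 0 1) ⊆ {x : ℂ | ‖x‖ = 1} := by
    rintro _ ⟨t, ⟨ht0, ht1⟩, rfl⟩
    have h1 : (0:ℝ) ≤ 1 - t^2 := by nlinarith
    simp only [Set.mem_setOf_eq, Complex.norm_def, Complex.normSq_mk]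
    rw [Real.mul_self_sqrt h1, show t * t + (1 - t^2) = 1 by ring, Real.sqrt_one]
  refine Set.Infinite.mono hsub ?_
  rw [Set.infinite_image_iff (fun a _ b _ h => congrArg Complex.re h)]
  exact Set.Ioo_infinite (show (0:ℝ) < 1 by norm_num)

/-- a rational map that restricts to a proper map of the unit ball
to the unit ball takes points outside the closed ball (which are not poles) to
points outside the closed ball. -/
theorem outside_lemma {n N : ℕ} (hn : 1 ≤ n) (hN : 1 ≤ N)
    (P : Fin N → MvPolynomial (Fin n) ℂ) (q : MvPolynomial (Fin n) ℂ)
    (hq : ∀ z : EuclideanSpace ℂ (Fin n), ‖z‖ ≤ 1 →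
      MvPolynomial.eval (fun j => z j) q ≠ 0)
    (hball : ∀ z : EuclideanSpace ℂ (Fin n), ‖z‖ < 1 → ‖ratMap P q z‖ < 1)
    (hsphere : ∀ z : EuclideanSpace ℂ (Fin n), ‖z‖ = 1 →
      ‖evalPoly P z‖ = ‖MvPolynomial.eval (fun j => z j) q‖)
    (z : EuclideanSpace ℂ (Fin n)) (hz : 1 < ‖z‖)
    (hpole : MvPolynomial.eval (fun j => z j) q ≠ 0) :
    1 < ‖ratMap P q z‖ := by
  classical
  have hr0 : (0:ℝ) < ‖z‖ := lt_trans one_pos hz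
  set r : ℝ := ‖z‖ with hrdef
  have hrne : ((r:ℂ)) ≠ 0 := by exact_mod_cast ne_of_gt hr0
  set w : EuclideanSpace ℂ (Fin n) := ((r:ℂ))⁻¹ • z with hwdef
  have hzw : ((r:ℂ)) • w = z := by
    rw [hwdef, smul_smul, mul_inv_cancel₀ hrne, one_smul]
  have hwnorm : ‖w‖ = 1 := by
    rw [hwdef, norm_smul, norm_inv, Complex.norm_real, Real.norm_eq_abs,
      abs_of_pos hr0, ← hrdef, inv_mul_cancel₀ (ne_of_gt hr0)]
  -- one-variable polynomials
  set g : Fin n → Polynomial ℂ := fun j => Polynomial.C (w j) * Polynomial.X with hgdef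
  have key : ∀ (p : MvPolynomial (Fin n) ℂ) (μ : ℂ),
      Polynomial.eval μ (MvPolynomial.aeval g p)
        = MvPolynomial.eval (fun j => (μ • w) j) p := by
    intro p μ
    rw [← Polynomial.coe_aeval_eq_eval, MvPolynomial.comp_aeval_apply]
    have : (fun j => (Polynomial.aeval μ) (g j)) = (fun j => (μ • w) j) := by
      funext j
      simp only [hgdef, map_mul, Polynomial.aeval_C, Polynomial.aeval_X,
        Algebra.algebraMap_self_apply, PiLp.smul_apply, smul_eq_mul]
      exact mul_comm _ _
    rw [this, ← MvPolynomial.coe_aeval_eq_eval]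
    rfl
  set A : Fin N → Polynomial ℂ := fun i => MvPolynomial.aeval g (P i) with hAdef
  set B : Polynomial ℂ := MvPolynomial.aeval g q with hBdef
  have hA : ∀ i (μ : ℂ), (A i).eval μ = evalPoly P (μ • w) i := by
    intro i μ; exact key (P i) μ
  have hB : ∀ (μ : ℂ), B.eval μ = MvPolynomial.eval (fun j => (μ • w) j) q := fun μ => key q μ
  set d : ℕ := max (Finset.univ.sup fun i => (A i).natDegree) B.natDegree with hddef
  have hdA : ∀ i, (A i).natDegree ≤ d := fun i =>
    le_trans (Finset.le_sup (f := fun i => (A i).natDegree) (Finset.mem_univ i)) (le_max_left _ _)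
  have hdB : B.natDegree ≤ d := le_max_right _ _
  set s : Fin N → Polynomial ℂ := fun i => (A i).map (starRingEnd ℂ) with hsdef
  set t : Polynomial ℂ := B.map (starRingEnd ℂ) with htdef
  have hds : ∀ i, (s i).natDegree ≤ d := fun i =>
    le_trans Polynomial.natDegree_map_le (hdA i)
  have hdt : t.natDegree ≤ d := le_trans Polynomial.natDegree_map_le hdB
  set G : Polynomial ℂ :=
    (∑ i, A i * Polynomial.reflect d (s i)) - B * Polynomial.reflect d t with hGdef
  have hGeval : ∀ μ : ℂ, μ ≠ 0 → G.eval μ =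
      μ ^ d * ((∑ i, (A i).eval μ * (starRingEnd ℂ) ((A i).eval ((starRingEnd ℂ) μ⁻¹)))
        - B.eval μ * (starRingEnd ℂ) (B.eval ((starRingEnd ℂ) μ⁻¹))) := by
    intro μ hμ
    simp only [hGdef, Polynomial.eval_sub, Polynomial.eval_finset_sum, Polynomial.eval_mul]
    rw [my_eval_reflect d t hdt hμ]
    have hsum : ∀ i ∈ Finset.univ, (A i).eval μ * (Polynomial.reflect d (s i)).eval μ
        = (A i).eval μ * (μ ^ d * (starRingEnd ℂ) ((A i).eval ((starRingEnd ℂ) μ⁻¹))) := by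
      intro i _
      rw [my_eval_reflect d (s i) (hds i) hμ, hsdef]
      simp only [my_eval_conj_map]
    rw [Finset.sum_congr rfl hsum, htdef, my_eval_conj_map]
    rw [mul_sub, Finset.mul_sum]
    congr 1
    · exact Finset.sum_congr rfl (fun i _ => by ring)
    · ring
  have hGzero : G = 0 := by
    apply Polynomial.eq_zero_of_infinite_isRoot
    apply my_circle_infinite.mono
    intro μ hμ
    have hμ1 : ‖μ‖ = 1 := hμ
    have hμ0 : μ ≠ 0 := by
      intro h; rw [h, norm_zero] at hμ1; norm_num at hμ1
    have h1 : μ * (starRingEnd ℂ) μ = 1 := by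
      rw [Complex.mul_conj]
      norm_cast
      rw [Complex.normSq_eq_norm_sq, hμ1, one_pow]
    have h2 : (starRingEnd ℂ) μ⁻¹ = μ := by
      rw [map_inv₀]
      exact inv_eq_of_mul_eq_one_left h1
    have hμw : ‖μ • w‖ = 1 := by rw [norm_smul, hμ1, hwnorm, one_mul]
    have hs := hsphere (μ • w) hμw
    have hsq : ∑ i, ‖evalPoly P (μ • w) i‖ ^ 2
        = ‖MvPolynomial.eval (fun j => (μ • w) j) q‖ ^ 2 := by
      have h3 := congrArg (· ^ 2) hs
      simp only [EuclideanSpace.norm_eq] at h3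
      rwa [Real.sq_sqrt (Finset.sum_nonneg fun i _ => sq_nonneg _)] at h3
    show G.IsRoot μ
    rw [Polynomial.IsRoot, hGeval μ hμ0, h2]
    apply mul_eq_zero_of_right
    rw [sub_eq_zero]
    simp only [hA, hB, Complex.mul_conj]
    rw [show ∑ i, ((Complex.normSq (evalPoly P (μ • w) i) : ℂ))
        = ((∑ i, Complex.normSq (evalPoly P (μ • w) i) : ℝ) : ℂ) by push_cast; ring]
    norm_cast
    simp only [Complex.normSq_eq_norm_sq]
    exact hsq
  -- evaluate at r
  have hgr : G.eval (r:ℂ) = 0 := by rw [hGzero, Polynomial.eval_zero]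
  rw [hGeval (r:ℂ) hrne] at hgr
  have hrc : (starRingEnd ℂ) ((r:ℂ))⁻¹ = ((r:ℂ))⁻¹ := by
    rw [map_inv₀, Complex.conj_ofReal]
  rw [hrc] at hgr
  have hid : ∑ i, (A i).eval (r:ℂ) * (starRingEnd ℂ) ((A i).eval ((r:ℂ))⁻¹)
      = B.eval (r:ℂ) * (starRingEnd ℂ) (B.eval ((r:ℂ))⁻¹) := by
    have := mul_eq_zero.mp hgr
    rcases this with h | h
    · exact absurd h (pow_ne_zero d hrne)
    · exact sub_eq_zero.mp h
  set u : EuclideanSpace ℂ (Fin n) := ((r:ℂ))⁻¹ • w with hudef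
  have hunorm : ‖u‖ = r⁻¹ := by
    rw [hudef, norm_smul, norm_inv, Complex.norm_real, Real.norm_eq_abs,
      abs_of_pos hr0, hwnorm, mul_one]
  have hun1 : ‖u‖ < 1 := by
    rw [hunorm]
    exact inv_lt_one_of_one_lt₀ hz
  have hAr : ∀ i, (A i).eval (r:ℂ) = evalPoly P z i := by
    intro i; rw [hA i, hzw]
  have hAir : ∀ i, (A i).eval ((r:ℂ))⁻¹ = evalPoly P u i := by
    intro i; rw [hA i]
  have hBr : B.eval (r:ℂ) = MvPolynomial.eval (fun j => z j) q := by
    rw [hB]; simp only [hzw]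
  have hBir : B.eval ((r:ℂ))⁻¹ = MvPolynomial.eval (fun j => u j) q := by
    rw [hB]
  set pu := evalPoly P u with hpudef
  set pz := evalPoly P z with hpzdef
  set b' := MvPolynomial.eval (fun j => u j) q with hb'def
  set b := MvPolynomial.eval (fun j => z j) q with hbdef
  have hid2 : ∑ i, pz i * (starRingEnd ℂ) (pu i) = b * (starRingEnd ℂ) b' := by
    calc ∑ i, pz i * (starRingEnd ℂ) (pu i)
        = ∑ i, (A i).eval (r:ℂ) * (starRingEnd ℂ) ((A i).eval ((r:ℂ))⁻¹) :=
          Finset.sum_congr rfl fun i _ => by rw [hAr i, hAir i]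
      _ = B.eval (r:ℂ) * (starRingEnd ℂ) (B.eval ((r:ℂ))⁻¹) := hid
      _ = b * (starRingEnd ℂ) b' := by rw [hBr, hBir]
  have hinner : (inner ℂ pu pz : ℂ) = ∑ i, pz i * (starRingEnd ℂ) (pu i) := by
    simp only [PiLp.inner_apply, RCLike.inner_apply]
  have hcs : ‖(inner ℂ pu pz : ℂ)‖ ≤ ‖pu‖ * ‖pz‖ := norm_inner_le_norm pu pz
  have hb'0 : b' ≠ 0 := hq u (le_of_lt hun1)
  have hb'pos : 0 < ‖b'‖ := norm_pos_iff.mpr hb'0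
  have hbpos : 0 < ‖b‖ := norm_pos_iff.mpr hpole
  have hpub : ‖pu‖ < ‖b'‖ := by
    have h5 := hball u hun1
    rw [ratMap, norm_smul, norm_inv, ← hb'def, ← hpudef] at h5
    calc ‖pu‖ = ‖b'‖ * (‖b'‖⁻¹ * ‖pu‖) := by
          rw [← mul_assoc, mul_inv_cancel₀ (ne_of_gt hb'pos), one_mul]
      _ < ‖b'‖ * 1 := mul_lt_mul_of_pos_left h5 hb'pos
      _ = ‖b'‖ := mul_one _
  have hmain : ‖b‖ * ‖b'‖ ≤ ‖pu‖ * ‖pz‖ := by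
    have h1 : ‖b * (starRingEnd ℂ) b'‖ = ‖b‖ * ‖b'‖ := by
      rw [norm_mul, RCLike.norm_conj]
    rw [← h1, ← hid2, ← hinner]
    exact hcs
  have hpz0 : 0 < ‖pz‖ := by
    by_contra h
    push_neg at h
    have h0 : ‖pz‖ = 0 := le_antisymm h (norm_nonneg _)
    rw [h0, mul_zero] at hmain
    exact absurd hmain (not_le.mpr (mul_pos hbpos hb'pos))
  have hfin : ‖b‖ < ‖pz‖ := by
    have h6 : ‖b‖ * ‖b'‖ < ‖pz‖ * ‖b'‖ := by
      calc ‖b‖ * ‖b'‖ ≤ ‖pu‖ * ‖pz‖ := hmain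
        _ < ‖b'‖ * ‖pz‖ := mul_lt_mul_of_pos_right hpub hpz0
        _ = ‖pz‖ * ‖b'‖ := mul_comm _ _
    exact lt_of_mul_lt_mul_right h6 (norm_nonneg b')
  rw [ratMap, norm_smul, norm_inv, ← hbdef, ← hpzdef, inv_mul_eq_div, one_lt_div hbpos]
  exact hfin
end

section
/- Let f = p/q be a rational map from ℂⁿ to ℂᴺ taking the unit sphere of ℂⁿ into the unit sphere of ℂᴺ, with q nonvanishing on the closed unit ball. Then for every z outside the closed unit ball that is not a pole of f, the reflection identity f(z) ⋅ conj(f(z/‖z‖²)) = 1 holds, where ⋅ denotes the bilinear dot product on ℂᴺ. -/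
open MvPolynomial Metric

namespace ReflAux

noncomputable def lineP {n : ℕ} (u : Fin n → ℂ) (p : MvPolynomial (Fin n) ℂ) : Polynomial ℂ :=
  MvPolynomial.eval₂ Polynomial.C (fun j => Polynomial.C (u j) * Polynomial.X) p

lemma eval_lineP {n : ℕ} (u : Fin n → ℂ) (p : MvPolynomial (Fin n) ℂ) (t : ℂ) :
    (lineP u p).eval t = MvPolynomial.eval (fun j => u j * t) p := by
  unfold lineP
  have h := MvPolynomial.eval₂_comp_left (Polynomial.evalRingHom t) Polynomial.C
      (fun j => Polynomial.C (u j) * Polynomial.X) p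
  simp only [Polynomial.coe_evalRingHom] at h
  rw [h]
  have h2 : (Polynomial.evalRingHom t).comp (Polynomial.C : ℂ →+* Polynomial ℂ)
      = RingHom.id ℂ := by
    ext c; simp
  rw [h2, MvPolynomial.eval₂_id]
  have h3 : (Polynomial.eval t ∘ fun j => Polynomial.C (u j) * Polynomial.X)
      = fun j => u j * t := by funext j; simp
  rw [h3]

lemma conj_eval {n : ℕ} (x : Fin n → ℂ) (p : MvPolynomial (Fin n) ℂ) :
    (starRingEnd ℂ) (MvPolynomial.eval x p)
      = MvPolynomial.eval (fun j => (starRingEnd ℂ) (x j))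
        (MvPolynomial.map (starRingEnd ℂ) p) := by
  rw [MvPolynomial.eval_map]
  have h := MvPolynomial.eval₂_comp_left (starRingEnd ℂ) (RingHom.id ℂ) x p
  rw [MvPolynomial.eval₂_id] at h
  rw [h]
  congr 1

noncomputable def refl (M : ℕ) (b : Polynomial ℂ) : Polynomial ℂ :=
  ∑ k ∈ Finset.range (M + 1), Polynomial.C (b.coeff k) * Polynomial.X ^ (M - k)

lemma eval_refl (M : ℕ) (b : Polynomial ℂ) (hb : b.natDegree ≤ M) {t : ℂ} (ht : t ≠ 0) :
    (refl M b).eval t = t ^ M * b.eval t⁻¹ := by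
  rw [Polynomial.eval_eq_sum_range' (Nat.lt_succ_of_le hb) t⁻¹]
  unfold refl
  rw [Polynomial.eval_finset_sum, Finset.mul_sum]
  refine Finset.sum_congr rfl fun k hk => ?_
  rw [Finset.mem_range, Nat.lt_succ_iff] at hk
  simp only [Polynomial.eval_mul, Polynomial.eval_C, Polynomial.eval_pow, Polynomial.eval_X]
  rw [pow_sub₀ t ht hk, ← inv_pow]
  ring

lemma circle_infinite : {t : ℂ | ‖t‖ = 1}.Infinite := by
  have hmaps : ∀ x ∈ Set.Ioo (-1 : ℝ) 1,
      (⟨x, Real.sqrt (1 - x ^ 2)⟩ : ℂ) ∈ {t : ℂ | ‖t‖ = 1} := by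
    intro x hx
    have h1 : (0:ℝ) ≤ 1 - x ^ 2 := by nlinarith [hx.1, hx.2]
    have h2 : Complex.normSq ⟨x, Real.sqrt (1 - x ^ 2)⟩ = 1 := by
      simp only [Complex.normSq_mk]
      rw [Real.mul_self_sqrt h1]; ring
    simp only [Set.mem_setOf_eq, Complex.norm_def, h2, Real.sqrt_one]
  have hinj : Set.InjOn (fun x : ℝ => (⟨x, Real.sqrt (1 - x ^ 2)⟩ : ℂ))
      (Set.Ioo (-1) 1) := fun a _ b _ h => congrArg Complex.re h
  exact ((Set.Ioo_infinite (by norm_num)).image hinj).mono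
    (Set.image_subset_iff.mpr hmaps)

lemma sum_mul_conj {N : ℕ} (v : EuclideanSpace ℂ (Fin N)) :
    (∑ i, v i * (starRingEnd ℂ) (v i)) = ((‖v‖ ^ 2 : ℝ) : ℂ) := by
  rw [EuclideanSpace.norm_eq, Real.sq_sqrt (by positivity)]
  push_cast
  refine Finset.sum_congr rfl fun i _ => ?_
  rw [Complex.mul_conj, Complex.normSq_eq_norm_sq]
  push_cast
  ring

end ReflAux

/-- the reflection identity `f(z) ⋅ conj (f(z/‖z‖²)) = 1` for a
rational map taking the unit sphere to the unit sphere, at points outside the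
closed unit ball that are not poles. -/
theorem reflection_identity {n N : ℕ}
    (P : Fin N → MvPolynomial (Fin n) ℂ) (q : MvPolynomial (Fin n) ℂ)
    (hq : ∀ z : EuclideanSpace ℂ (Fin n), ‖z‖ ≤ 1 →
      MvPolynomial.eval (fun j => z j) q ≠ 0)
    (hsphere : ∀ z : EuclideanSpace ℂ (Fin n), ‖z‖ = 1 →
      ‖evalPoly P z‖ = ‖MvPolynomial.eval (fun j => z j) q‖)
    (z : EuclideanSpace ℂ (Fin n)) (hz : 1 < ‖z‖)
    (hpole : MvPolynomial.eval (fun j => z j) q ≠ 0) :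
    (∑ i : Fin N, (ratMap P q z i) *
      (starRingEnd ℂ) (ratMap P q ((((‖z‖ : ℂ) ^ 2)⁻¹) • z) i)) = 1 := by
  classical
  have hr0 : (0:ℝ) < ‖z‖ := lt_trans one_pos hz
  set r : ℝ := ‖z‖ with hrdef
  have hrc : (r : ℂ) ≠ 0 := by exact_mod_cast hr0.ne'
  set u : EuclideanSpace ℂ (Fin n) := ((r:ℂ)⁻¹) • z with hudef
  have huj : ∀ j, u j = (r:ℂ)⁻¹ * z j := fun j => rfl
  have hu_norm : ‖u‖ = 1 := by
    rw [hudef, norm_smul, norm_inv, Complex.norm_real, Real.norm_eq_abs,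
      abs_of_pos hr0, ← hrdef, inv_mul_cancel₀ hr0.ne']
  set uf : Fin n → ℂ := fun j => u j with hufdef
  set cj := starRingEnd ℂ
  set a : Fin N → Polynomial ℂ := fun i => ReflAux.lineP uf (P i) with hadef
  set b : Fin N → Polynomial ℂ :=
    fun i => ReflAux.lineP (fun j => cj (uf j)) (MvPolynomial.map cj (P i)) with hbdef
  set aq : Polynomial ℂ := ReflAux.lineP uf q with haqdef
  set bq : Polynomial ℂ :=
    ReflAux.lineP (fun j => cj (uf j)) (MvPolynomial.map cj q) with hbqdef
  set M : ℕ := max (Finset.univ.sup fun i => (b i).natDegree) bq.natDegree with hMdef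
  have hbM : ∀ i, (b i).natDegree ≤ M := by
    intro i
    rw [hMdef]
    exact le_trans (Finset.le_sup (f := fun i => (b i).natDegree) (Finset.mem_univ i))
      (le_max_left _ _)
  have hbqM : bq.natDegree ≤ M := le_max_right _ _
  set S : Polynomial ℂ :=
    (∑ i, a i * ReflAux.refl M (b i)) - aq * ReflAux.refl M bq with hSdef
  -- evaluation of the b-type polynomials
  have hb_eval : ∀ (p : MvPolynomial (Fin n) ℂ) (s : ℂ),
      (ReflAux.lineP (fun j => cj (uf j)) (MvPolynomial.map cj p)).eval s
        = cj (MvPolynomial.eval (fun j => uf j * cj s) p) := by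
    intro p s
    rw [ReflAux.eval_lineP, ReflAux.conj_eval]
    have hfun : (fun j => (starRingEnd ℂ) (uf j * cj s)) = fun j => cj (uf j) * s := by
      funext j; simp [cj, map_mul]
    rw [hfun]
  -- expansion of S at any nonzero t
  have hexpand : ∀ t : ℂ, t ≠ 0 →
      S.eval t = t ^ M *
        ((∑ i, MvPolynomial.eval (fun j => uf j * t) (P i) *
            cj (MvPolynomial.eval (fun j => uf j * cj t⁻¹) (P i))) -
          MvPolynomial.eval (fun j => uf j * t) q *
            cj (MvPolynomial.eval (fun j => uf j * cj t⁻¹) q)) := by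
    intro t ht
    rw [hSdef]
    rw [Polynomial.eval_sub, Polynomial.eval_finset_sum]
    have h1 : ∀ i ∈ Finset.univ, (a i * ReflAux.refl M (b i)).eval t
        = t ^ M * (MvPolynomial.eval (fun j => uf j * t) (P i) *
            cj (MvPolynomial.eval (fun j => uf j * cj t⁻¹) (P i))) := by
      intro i _
      rw [Polynomial.eval_mul, ReflAux.eval_refl M (b i) (hbM i) ht, hadef,
        ReflAux.eval_lineP, hbdef]
      rw [hb_eval (P i) t⁻¹]
      ring
    rw [Finset.sum_congr rfl h1, Polynomial.eval_mul,
      ReflAux.eval_refl M bq hbqM ht, haqdef, ReflAux.eval_lineP, hbqdef,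
      hb_eval q t⁻¹, ← Finset.mul_sum]
    ring
  -- S vanishes on the unit circle
  have hS0 : ∀ t : ℂ, ‖t‖ = 1 → S.eval t = 0 := by
    intro t ht
    have ht0 : t ≠ 0 := by
      intro h; rw [h, norm_zero] at ht; norm_num at ht
    have htc : t * cj t = 1 := by
      rw [show (cj t = (starRingEnd ℂ) t) from rfl, Complex.mul_conj]
      rw [Complex.normSq_eq_norm_sq, ht]
      norm_num
    have hct : cj t = t⁻¹ := eq_inv_of_mul_eq_one_right htc
    have htinv : cj t⁻¹ = t := by rw [map_inv₀, hct, inv_inv]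
    set w : EuclideanSpace ℂ (Fin n) := t • u with hwdef
    have hw_norm : ‖w‖ = 1 := by
      rw [hwdef, norm_smul, hu_norm, mul_one, ht]
    have hwj : (fun j => uf j * t) = fun j => w j := by
      funext j
      show u j * t = (t • u) j
      simp [mul_comm]
    rw [hexpand t ht0, htinv, hwj]
    have h1 : (∑ i, MvPolynomial.eval (fun j => w j) (P i) *
          cj (MvPolynomial.eval (fun j => w j) (P i)))
        = ((‖evalPoly P w‖ ^ 2 : ℝ) : ℂ) := by
      have h := ReflAux.sum_mul_conj (evalPoly P w)
      simpa [evalPoly, cj] using h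
    have h2 : MvPolynomial.eval (fun j => w j) q * cj (MvPolynomial.eval (fun j => w j) q)
        = ((‖MvPolynomial.eval (fun j => w j) q‖ ^ 2 : ℝ) : ℂ) := by
      rw [show cj (MvPolynomial.eval (fun j => w j) q)
          = (starRingEnd ℂ) (MvPolynomial.eval (fun j => w j) q) from rfl,
        Complex.mul_conj, Complex.normSq_eq_norm_sq]
    rw [h1, h2, hsphere w hw_norm]
    simp
  -- S is the zero polynomial
  have hSzero : S = 0 := by
    apply Polynomial.eq_zero_of_infinite_isRoot
    exact ReflAux.circle_infinite.mono fun t ht => hS0 t ht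
  -- evaluate at t = r
  have hr_eval := hexpand (r : ℂ) hrc
  rw [hSzero, Polynomial.eval_zero] at hr_eval
  have harg1 : (fun j => uf j * (r : ℂ)) = fun j => z j := by
    funext j
    show u j * (r : ℂ) = z j
    rw [huj j]
    field_simp
  set w₀ : EuclideanSpace ℂ (Fin n) := (((r : ℝ) : ℂ) ^ 2)⁻¹ • z with hw0def
  have hw0j : ∀ j, w₀ j = ((r : ℂ) ^ 2)⁻¹ * z j := fun j => rfl
  have harg2 : (fun j => uf j * cj ((r : ℂ))⁻¹) = fun j => w₀ j := by
    funext j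
    have hcr : cj ((r : ℂ)⁻¹) = (r : ℂ)⁻¹ := by
      rw [show cj ((r : ℂ)⁻¹) = (starRingEnd ℂ) ((r : ℂ)⁻¹) from rfl, map_inv₀,
        Complex.conj_ofReal]
    show u j * cj ((r : ℂ))⁻¹ = w₀ j
    rw [hcr, huj j, hw0j j, sq, mul_inv]
    ring
  rw [harg1, harg2] at hr_eval
  have hpow : ((r : ℂ)) ^ M ≠ 0 := pow_ne_zero _ hrc
  have hkey : (∑ i, MvPolynomial.eval (fun j => z j) (P i) *
        cj (MvPolynomial.eval (fun j => w₀ j) (P i)))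
      = MvPolynomial.eval (fun j => z j) q * cj (MvPolynomial.eval (fun j => w₀ j) q) := by
    rcases mul_eq_zero.mp hr_eval.symm with h | h
    · exact absurd h hpow
    · exact sub_eq_zero.mp h
  -- the point w₀ is in the closed unit ball
  have hw0_norm : ‖w₀‖ ≤ 1 := by
    rw [hw0def, norm_smul, norm_inv, norm_pow, Complex.norm_real, Real.norm_eq_abs,
      abs_of_pos hr0, ← hrdef, sq]
    have hx : ((r * r)⁻¹ * r : ℝ) = r⁻¹ := by field_simp
    rw [hx]
    rw [inv_le_one_iff₀]
    right
    exact hz.le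
  set Q0 : ℂ := MvPolynomial.eval (fun j => w₀ j) q with hQ0def
  have hQ0 : Q0 ≠ 0 := hq w₀ hw0_norm
  have hQ0c : cj Q0 ≠ 0 := by
    intro h
    apply hQ0
    have := congrArg (starRingEnd ℂ) h
    simpa [cj] using this
  -- final computation
  simp only [ratMap, evalPoly, PiLp.smul_apply, smul_eq_mul, map_mul, map_inv₀]
  have hterm : ∀ i ∈ Finset.univ,
      (MvPolynomial.eval (fun j => z j) q)⁻¹ * MvPolynomial.eval (fun j => z j) (P i) *
        ((cj Q0)⁻¹ * cj (MvPolynomial.eval (fun j => w₀ j) (P i)))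
      = ((MvPolynomial.eval (fun j => z j) q)⁻¹ * (cj Q0)⁻¹) *
          (MvPolynomial.eval (fun j => z j) (P i) *
            cj (MvPolynomial.eval (fun j => w₀ j) (P i))) := by
    intro i _
    ring
  rw [Finset.sum_congr rfl hterm, ← Finset.mul_sum, hkey]
  field_simp
end

section
/- If a polynomial map p : ℂⁿ → ℂᴺ restricts to a proper map of the unit ball 𝔹ₙ onto-into 𝔹ᴺ and additionally satisfies ‖p(z)‖ → ∞ as ‖z‖ → ∞, then p restricts to a proper map from ℂⁿ ∖ closure(𝔹ₙ) to ℂᴺ ∖ closure(𝔹ᴺ). -/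
open MvPolynomial Metric

def ProperOn {α β : Type*} [TopologicalSpace α] [TopologicalSpace β]
    (f : α → β) (S : Set α) (T : Set β) : Prop :=
  Set.MapsTo f S T ∧ ∀ K : Set β, K ⊆ T → IsCompact K → IsCompact (S ∩ f ⁻¹' K)


lemma eval₂_id' (p : Polynomial ℂ) (x : ℂ) : Polynomial.eval₂ (RingHom.id ℂ) x p = p.eval x := rfl

lemma reflect_eval' {d : ℕ} (f : Polynomial ℂ) (hf : f.natDegree ≤ d) (w : ℂ) (hw : w ≠ 0) :
    (Polynomial.reflect d f).eval w = w ^ d * f.eval w⁻¹ := by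
  haveI : Invertible (w⁻¹) := invertibleOfNonzero (inv_ne_zero hw)
  have h := Polynomial.eval₂_reflect_mul_pow (RingHom.id ℂ) (w⁻¹) d f hf
  rw [invOf_eq_inv] at h
  simp only [inv_inv, eval₂_id'] at h
  have h2 : w⁻¹ ^ d * w ^ d = 1 := by
    rw [← mul_pow, inv_mul_cancel₀ hw, one_pow]
  calc (Polynomial.reflect d f).eval w
      = (Polynomial.reflect d f).eval w * (w⁻¹ ^ d * w ^ d) := by rw [h2, mul_one]
    _ = ((Polynomial.reflect d f).eval w * w⁻¹ ^ d) * w ^ d := by ring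
    _ = w ^ d * f.eval w⁻¹ := by rw [h]; ring

lemma conj_eval (q : Polynomial ℂ) (x : ℂ) :
    (q.map (starRingEnd ℂ)).eval x = (starRingEnd ℂ) (q.eval ((starRingEnd ℂ) x)) := by
  rw [Polynomial.eval_map]
  have := Polynomial.hom_eval₂ (g := starRingEnd ℂ) (f := RingHom.id ℂ) (p := q) ((starRingEnd ℂ) x)
  simp only [RingHom.comp_id, Complex.conj_conj, eval₂_id'] at this
  rw [← this]

lemma line_eval {n : ℕ} (p : MvPolynomial (Fin n) ℂ) (u : Fin n → ℂ) (t : ℂ) :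
    (MvPolynomial.aeval (fun j => Polynomial.C (u j) * Polynomial.X) p).eval t
      = MvPolynomial.eval (fun j => t * u j) p := by
  rw [MvPolynomial.aeval_def, ← Polynomial.coe_evalRingHom,
    MvPolynomial.eval₂_comp_left (Polynomial.evalRingHom t)]
  congr 1
  · ext a : 1; simp
  · ext j
    simp only [Function.comp_apply, Polynomial.coe_evalRingHom, Polynomial.eval_mul,
      Polynomial.eval_C, Polynomial.eval_X]
    ring

lemma circle_infinite : {w : ℂ | ‖w‖ = 1}.Infinite := by
  have hinj : Set.InjOn (fun x : ℝ => (⟨x, Real.sqrt (1 - x^2)⟩ : ℂ)) (Set.Ioo (-1) 1) := by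
    intro a _ b _ h
    exact congrArg Complex.re h
  have hsub : (fun x : ℝ => (⟨x, Real.sqrt (1 - x^2)⟩ : ℂ)) '' (Set.Ioo (-1) 1) ⊆ {w : ℂ | ‖w‖ = 1} := by
    rintro _ ⟨x, hx, rfl⟩
    have h1 : (0:ℝ) ≤ 1 - x^2 := by nlinarith [hx.1, hx.2]
    simp only [Set.mem_setOf_eq, Complex.norm_def, Complex.normSq_mk]
    have h2 : x * x + Real.sqrt (1 - x^2) * Real.sqrt (1 - x^2) = 1 := by
      have := Real.mul_self_sqrt h1
      nlinarith
    rw [h2, Real.sqrt_one]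
  exact Set.Infinite.mono hsub (((Set.Ioo_infinite (by norm_num)).image hinj))

lemma norm_sq_sum {N : ℕ} (v : EuclideanSpace ℂ (Fin N)) :
    (∑ i, v i * (starRingEnd ℂ) (v i)) = (‖v‖ : ℂ)^2 := by
  have : ∀ i, v i * (starRingEnd ℂ) (v i) = ((‖v i‖ : ℝ) ^2 : ℂ) := by
    intro i
    rw [Complex.mul_conj]
    norm_cast
    rw [Complex.normSq_eq_norm_sq]
  rw [Finset.sum_congr rfl (fun i _ => this i)]
  push_cast
  norm_cast
  rw [← Real.sqrt_sq (norm_nonneg v), EuclideanSpace.norm_eq]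
  rw [Real.sq_sqrt (by positivity), Real.sq_sqrt (by positivity)]

lemma key_outside {n N : ℕ} (P : Fin N → MvPolynomial (Fin n) ℂ)
    (hball : Set.MapsTo (evalPoly P) (ball (0 : EuclideanSpace ℂ (Fin n)) 1)
      (ball (0 : EuclideanSpace ℂ (Fin N)) 1))
    (hsphere : ∀ z : EuclideanSpace ℂ (Fin n), ‖z‖ = 1 → ‖evalPoly P z‖ = 1)
    {z : EuclideanSpace ℂ (Fin n)} (hz : 1 < ‖z‖) : 1 < ‖evalPoly P z‖ := by
  classical
  set u : EuclideanSpace ℂ (Fin n) := (‖z‖ : ℂ)⁻¹ • z with hu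
  have hznorm : (0:ℝ) < ‖z‖ := lt_trans one_pos hz
  have hzc : ((‖z‖ : ℝ) : ℂ) ≠ 0 := by exact_mod_cast ne_of_gt hznorm
  have hunorm : ‖u‖ = 1 := by
    rw [hu, norm_smul]
    simp [norm_inv, abs_of_pos hznorm,
      inv_mul_cancel₀ (ne_of_gt hznorm)]
  -- one-variable polynomials along the line t ↦ t • u
  set q : Fin N → Polynomial ℂ :=
    fun i => MvPolynomial.aeval (fun j => Polynomial.C (u j) * Polynomial.X) (P i) with hq
  have hqe : ∀ i (t : ℂ), (q i).eval t = (evalPoly P (t • u)) i := by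
    intro i t
    rw [hq, line_eval]
    simp [evalPoly]
  set r : Fin N → Polynomial ℂ := fun i => (q i).map (starRingEnd ℂ) with hr
  set d : ℕ := Finset.univ.sup (fun i => (r i).natDegree) with hd
  have hdle : ∀ i, (r i).natDegree ≤ d := fun i => Finset.le_sup (f := fun i => (r i).natDegree) (Finset.mem_univ i)
  set A : Polynomial ℂ := ∑ i, q i * Polynomial.reflect d (r i) with hA
  have hAeval : ∀ w : ℂ, w ≠ 0 →
      A.eval w = w ^ d * ∑ i, (q i).eval w * (r i).eval w⁻¹ := by
    intro w hw
    rw [hA, Polynomial.eval_finset_sum, Finset.mul_sum]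
    refine Finset.sum_congr rfl fun i _ => ?_
    rw [Polynomial.eval_mul, reflect_eval' (r i) (hdle i) w hw]
    ring
  have hcirc : ∀ w : ℂ, ‖w‖ = 1 → A.eval w = w ^ d := by
    intro w hwn
    have hw : w ≠ 0 := by intro h; rw [h] at hwn; simp at hwn
    have hconjw : (starRingEnd ℂ) w⁻¹ = w := by
      have hmul : w * (starRingEnd ℂ) w = 1 := by
        rw [Complex.mul_conj]
        norm_cast
        rw [Complex.normSq_eq_norm_sq, hwn, one_pow]
      have : (starRingEnd ℂ) w = w⁻¹ := eq_inv_of_mul_eq_one_right hmul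
      rw [map_inv₀, this, inv_inv]
    have hri : ∀ i, (r i).eval w⁻¹ = (starRingEnd ℂ) ((q i).eval w) := by
      intro i
      rw [hr, conj_eval, hconjw]
    rw [hAeval w hw]
    have : ∑ i, (q i).eval w * (r i).eval w⁻¹ = 1 := by
      rw [Finset.sum_congr rfl (fun i _ => by rw [hri i, hqe i w])]
      have := norm_sq_sum (evalPoly P (w • u))
      rw [hsphere (w • u) (by rw [norm_smul, hunorm, mul_one, hwn])] at this
      simpa using this
    rw [this, mul_one]
  have hAX : A = Polynomial.X ^ d := by
    apply Polynomial.eq_of_infinite_eval_eq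
    apply Set.Infinite.mono _ circle_infinite
    intro w hwn
    simp only [Set.mem_setOf_eq] at hwn ⊢
    rw [hcirc w hwn, Polynomial.eval_pow, Polynomial.eval_X]
  -- evaluate at real t = ‖z‖
  set t : ℂ := ((‖z‖ : ℝ) : ℂ) with ht
  have htne : t ≠ 0 := hzc
  have h1 : ∑ i, (q i).eval t * (r i).eval t⁻¹ = 1 := by
    have e1 : A.eval t = t ^ d := by rw [hAX]; simp
    rw [hAeval t htne] at e1
    have : t ^ d ≠ 0 := pow_ne_zero _ htne
    field_simp at e1
    simpa [one_div] using e1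
  -- interpret as inner product
  have htu : t • u = z := by
    rw [hu, smul_smul, mul_inv_cancel₀ hzc, one_smul]
  have hri2 : ∀ i, (r i).eval t⁻¹ = (starRingEnd ℂ) ((q i).eval t⁻¹) := by
    intro i
    rw [hr, conj_eval]
    congr 1
    rw [map_inv₀, Complex.conj_ofReal]
  set b : EuclideanSpace ℂ (Fin N) := evalPoly P (t⁻¹ • u) with hb
  set a : EuclideanSpace ℂ (Fin N) := evalPoly P z with ha
  have hsum : ∑ i, a i * (starRingEnd ℂ) (b i) = 1 := by
    rw [← h1]
    refine Finset.sum_congr rfl fun i _ => ?_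
    rw [hri2 i, hqe i t, hqe i t⁻¹, htu]
  have hbnorm : ‖b‖ < 1 := by
    have : ‖t⁻¹ • u‖ < 1 := by
      rw [norm_smul, hunorm, mul_one, norm_inv, ht, Complex.norm_real,
        norm_norm]
      exact inv_lt_one_of_one_lt₀ hz
    have := hball (mem_ball_zero_iff.mpr this)
    exact mem_ball_zero_iff.mp this
  have hinner : (inner ℂ b a : ℂ) = 1 := by
    rw [PiLp.inner_apply]
    rw [← hsum]
    refine Finset.sum_congr rfl fun i _ => ?_
    rw [RCLike.inner_apply]
  have hcs : ‖(inner ℂ b a : ℂ)‖ ≤ ‖b‖ * ‖a‖ := norm_inner_le_norm b a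
  rw [hinner] at hcs
  simp only [norm_one] at hcs
  by_contra hle
  push_neg at hle
  have : ‖b‖ * ‖a‖ ≤ ‖b‖ := mul_le_of_le_one_right (norm_nonneg b) hle
  linarith

/-- a polynomial proper map of unit balls whose norm tends to
infinity at infinity restricts to a proper map of the complements of the
closed unit balls. -/
theorem proper_on_complement {n N : ℕ}
    (P : Fin N → MvPolynomial (Fin n) ℂ)
    (hball : Set.MapsTo (evalPoly P) (ball (0 : EuclideanSpace ℂ (Fin n)) 1)
      (ball (0 : EuclideanSpace ℂ (Fin N)) 1))
    (hproper : ProperOn (evalPoly P) (ball (0 : EuclideanSpace ℂ (Fin n)) 1)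
      (ball (0 : EuclideanSpace ℂ (Fin N)) 1))
    (hsphere : ∀ z : EuclideanSpace ℂ (Fin n), ‖z‖ = 1 → ‖evalPoly P z‖ = 1)
    (hinfty : Filter.Tendsto (fun z : EuclideanSpace ℂ (Fin n) => ‖evalPoly P z‖)
      (Bornology.cobounded _) Filter.atTop) :
    ProperOn (evalPoly P) ((closedBall (0 : EuclideanSpace ℂ (Fin n)) 1)ᶜ)
      ((closedBall (0 : EuclideanSpace ℂ (Fin N)) 1)ᶜ) := by
  have hcont : Continuous (evalPoly P) := by
    have h2 : Continuous fun v : Fin n → ℂ => (fun i => MvPolynomial.eval v (P i) : Fin N → ℂ) :=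
      continuous_pi fun i => MvPolynomial.continuous_eval (P i)
    exact ((PiLp.continuous_toLp 2 fun _ : Fin N => ℂ).comp h2).comp
      (PiLp.continuous_ofLp 2 fun _ : Fin n => ℂ)
  constructor
  · intro z hz
    have hz' : 1 < ‖z‖ := by
      simpa [Metric.mem_closedBall, dist_zero_right] using hz
    simpa [Metric.mem_closedBall, dist_zero_right] using
      not_le.mpr (key_outside P hball hsphere hz')
  · intro K hK hKc
    obtain ⟨M, hM⟩ := hKc.isBounded.exists_norm_le
    -- boundedness
    have hev : ∀ᶠ w in Bornology.cobounded (EuclideanSpace ℂ (Fin n)),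
        M < ‖evalPoly P w‖ := hinfty.eventually (Filter.eventually_gt_atTop M)
    have hbddc : Bornology.IsBounded {w : EuclideanSpace ℂ (Fin n) | M < ‖evalPoly P w‖}ᶜ := by
      rw [← Bornology.isCobounded_compl_iff, compl_compl]
      exact Bornology.isCobounded_def.mpr hev
    have hbdd : Bornology.IsBounded
        ((closedBall (0 : EuclideanSpace ℂ (Fin n)) 1)ᶜ ∩ evalPoly P ⁻¹' K) := by
      apply hbddc.subset
      rintro w ⟨-, hwK⟩
      simp only [Set.mem_compl_iff, Set.mem_setOf_eq, not_lt]
      exact hM _ hwK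
    -- closedness
    have heq : (closedBall (0 : EuclideanSpace ℂ (Fin n)) 1)ᶜ ∩ evalPoly P ⁻¹' K
        = (ball (0 : EuclideanSpace ℂ (Fin n)) 1)ᶜ ∩ evalPoly P ⁻¹' K := by
      apply Set.Subset.antisymm
      · exact Set.inter_subset_inter_left _ (Set.compl_subset_compl.mpr ball_subset_closedBall)
      · rintro w ⟨hw1, hw2⟩
        refine ⟨?_, hw2⟩
        simp only [Set.mem_compl_iff, Metric.mem_ball, Metric.mem_closedBall,
          dist_zero_right, not_lt, not_le] at hw1 ⊢
        rcases lt_or_eq_of_le hw1 with h | h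
        · exact h
        · exfalso
          have h1 : ‖evalPoly P w‖ = 1 := hsphere w h.symm
          have h2 := hK hw2
          simp only [Set.mem_compl_iff, Metric.mem_closedBall, dist_zero_right, not_le] at h2
          linarith
    have hclosed : IsClosed
        ((closedBall (0 : EuclideanSpace ℂ (Fin n)) 1)ᶜ ∩ evalPoly P ⁻¹' K) := by
      rw [heq]
      exact (isOpen_ball.isClosed_compl).inter (hKc.isClosed.preimage hcont)
    exact Metric.isCompact_of_isClosed_isBounded hclosed hbdd
end

section
/- Let n ≥ 2, k ≥ 2 and let f : ℂⁿ ⇢ ℂᴺ be a nonconstant rational map taking the sphere of radius r_j (centered at 0) into the sphere of radius R_j (centered at 0) for j = 1, …, k, where all r_j > 0 are distinct and R_j > 0. Then r_j < r_ℓ implies R_j < R_ℓ. -/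
open MvPolynomial Metric

lemma evalAnalytic {n : ℕ} (p : MvPolynomial (Fin n) ℂ) :
    AnalyticOnNhd ℂ (fun z : EuclideanSpace ℂ (Fin n) =>
      MvPolynomial.eval (fun j => z j) p) Set.univ := by
  induction p using MvPolynomial.induction_on with
  | C a => simpa using analyticOnNhd_const
  | add p q hp hq => simp only [MvPolynomial.eval_add]; exact hp.add hq
  | mul_X p i hp =>
      simp only [MvPolynomial.eval_mul, MvPolynomial.eval_X]
      exact hp.mul ((EuclideanSpace.proj i : EuclideanSpace ℂ (Fin n) →L[ℂ] ℂ).analyticOnNhd _)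

lemma evalDiff {n : ℕ} (p : MvPolynomial (Fin n) ℂ) :
    Differentiable ℂ (fun z : EuclideanSpace ℂ (Fin n) =>
      MvPolynomial.eval (fun j => z j) p) :=
  fun z => ((evalAnalytic p) z trivial).differentiableAt

lemma evalPolyDiff {n N : ℕ} (P : Fin N → MvPolynomial (Fin n) ℂ) :
    Differentiable ℂ (evalPoly P) := by
  have h : Differentiable ℂ (fun z : EuclideanSpace ℂ (Fin n) =>
      (fun i => MvPolynomial.eval (fun j => z j) (P i) : Fin N → ℂ)) :=
    differentiable_pi.2 fun i => evalDiff (P i)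
  exact ((PiLp.continuousLinearEquiv 2 ℂ (fun _ : Fin N => ℂ)).symm.differentiable).comp h


/-- monotonicity of radii for a nonconstant rational `k`-fold
sphere map: if it takes the `r j`-sphere to the `R j`-sphere, then
`r j < r ℓ` implies `R j < R ℓ`. -/
theorem radii_monotone {n N k : ℕ} (hn : 2 ≤ n) (hk : 2 ≤ k)
    (P : Fin N → MvPolynomial (Fin n) ℂ) (q : MvPolynomial (Fin n) ℂ)
    (r R : Fin k → ℝ)
    (hrpos : ∀ j, 0 < r j) (hRpos : ∀ j, 0 < R j)
    (hrinj : Function.Injective r)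
    (hq : ∀ (j : Fin k) (z : EuclideanSpace ℂ (Fin n)), ‖z‖ ≤ r j →
      MvPolynomial.eval (fun i => z i) q ≠ 0)
    (hsphere : ∀ (j : Fin k) (z : EuclideanSpace ℂ (Fin n)), ‖z‖ = r j →
      ‖ratMap P q z‖ = R j)
    (hnonconst : ¬ ∃ w : EuclideanSpace ℂ (Fin N),
      ∀ z : EuclideanSpace ℂ (Fin n),
        MvPolynomial.eval (fun i => z i) q ≠ 0 → ratMap P q z = w) :
    ∀ j ℓ, r j < r ℓ → R j < R ℓ := by
  intro j ℓ hlt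
  haveI : Inhabited (Fin n) := ⟨⟨0, by omega⟩⟩
  haveI : Nontrivial (EuclideanSpace ℂ (Fin n)) := inferInstance
  by_contra hR
  push_neg at hR
  have hrl : (0:ℝ) < r ℓ := hrpos ℓ
  set f := ratMap P q with hf
  -- differentiability on the closed ball
  have hdiffcb : DifferentiableOn ℂ f (closedBall 0 (r ℓ)) := by
    have hqd : DifferentiableOn ℂ
        (fun z : EuclideanSpace ℂ (Fin n) => (MvPolynomial.eval (fun i => z i) q)⁻¹)
        (closedBall 0 (r ℓ)) :=
      ((evalDiff q).differentiableOn).inv (fun z hz => hq ℓ z (mem_closedBall_zero_iff.1 hz))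
    exact hqd.smul (evalPolyDiff P).differentiableOn
  have hdcl : DiffContOnCl ℂ f (ball 0 (r ℓ)) := by
    refine ⟨hdiffcb.mono ball_subset_closedBall, ?_⟩
    rw [closure_ball 0 (ne_of_gt hrl)]
    exact hdiffcb.continuousOn
  -- max principle bound
  have hbound : ∀ z ∈ closedBall (0 : EuclideanSpace ℂ (Fin n)) (r ℓ), ‖f z‖ ≤ R ℓ := by
    intro z hz
    refine Complex.norm_le_of_forall_mem_frontier_norm_le isBounded_ball hdcl ?_ ?_
    · intro w hw
      rw [frontier_ball 0 (ne_of_gt hrl)] at hw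
      exact le_of_eq (hsphere ℓ w (mem_sphere_zero_iff_norm.1 hw))
    · rwa [closure_ball 0 (ne_of_gt hrl)]
  -- a point on the r j sphere
  set z₀ : EuclideanSpace ℂ (Fin n) := EuclideanSpace.single ⟨0, by omega⟩ ((r j : ℂ)) with hz₀
  have hz₀norm : ‖z₀‖ = r j := by
    rw [hz₀, EuclideanSpace.norm_single, Complex.norm_real, Real.norm_eq_abs,
      abs_of_pos (hrpos j)]
  have hz₀mem : z₀ ∈ ball (0 : EuclideanSpace ℂ (Fin n)) (r ℓ) := by
    rw [mem_ball_zero_iff, hz₀norm]; exact hlt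
  have hfz₀ : ‖f z₀‖ = R j := hsphere j z₀ hz₀norm
  have hmax : IsMaxOn (norm ∘ f) (ball 0 (r ℓ)) z₀ := by
    intro z hz
    simp only [Function.comp_apply, Set.mem_setOf_eq]
    calc ‖f z‖ ≤ R ℓ := hbound z (ball_subset_closedBall hz)
      _ ≤ R j := hR
      _ = ‖f z₀‖ := hfz₀.symm
  have hconst := Complex.eqOn_of_isPreconnected_of_isMaxOn_norm
    (convex_ball (0 : EuclideanSpace ℂ (Fin n)) (r ℓ)).isPreconnected isOpen_ball
    (hdiffcb.mono ball_subset_closedBall) hz₀mem hmax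
  set w := f z₀ with hw
  -- each component of P - w*q vanishes on the ball, hence everywhere
  have hzero : ∀ (i : Fin N) (z : EuclideanSpace ℂ (Fin n)),
      MvPolynomial.eval (fun a => z a) (P i)
        - w i * MvPolynomial.eval (fun a => z a) q = 0 := by
    intro i
    have hA : AnalyticOnNhd ℂ (fun z : EuclideanSpace ℂ (Fin n) =>
        MvPolynomial.eval (fun a => z a) (P i)
          - w i * MvPolynomial.eval (fun a => z a) q) Set.univ :=
      (evalAnalytic (P i)).sub (analyticOnNhd_const.mul (evalAnalytic q))
    have h0 : (0 : EuclideanSpace ℂ (Fin n)) ∈ ball (0 : EuclideanSpace ℂ (Fin n)) (r ℓ) :=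
      mem_ball_self hrl
    have hball : ∀ z ∈ ball (0 : EuclideanSpace ℂ (Fin n)) (r ℓ),
        MvPolynomial.eval (fun a => z a) (P i)
          - w i * MvPolynomial.eval (fun a => z a) q = 0 := by
      intro z hz
      have hqz : MvPolynomial.eval (fun a => z a) q ≠ 0 :=
        hq ℓ z (le_of_lt (mem_ball_zero_iff.1 hz))
      have hfz : f z = w := hconst hz
      have : (MvPolynomial.eval (fun a => z a) q)⁻¹
          * MvPolynomial.eval (fun a => z a) (P i) = w i := by
        have := congrArg (fun v => v i) hfz
        simpa [hf, ratMap, evalPoly, smul_eq_mul] using this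
      field_simp at this
      linear_combination this
    have hev : (fun z : EuclideanSpace ℂ (Fin n) =>
        MvPolynomial.eval (fun a => z a) (P i)
          - w i * MvPolynomial.eval (fun a => z a) q) =ᶠ[nhds 0] 0 := by
      filter_upwards [isOpen_ball.mem_nhds h0] with z hz using hball z hz
    have := hA.eqOn_zero_of_preconnected_of_eventuallyEq_zero isPreconnected_univ
      (Set.mem_univ 0) hev
    exact fun z => this (Set.mem_univ z)
  -- f is globally constant where q ≠ 0 : contradiction
  refine hnonconst ⟨w, fun z hz => ?_⟩
  refine PiLp.ext fun i => ?_
  have h0 := hzero i z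
  have heq : MvPolynomial.eval (fun a => z a) (P i)
      = w i * MvPolynomial.eval (fun a => z a) q := by linear_combination h0
  show (MvPolynomial.eval (fun a => z a) q)⁻¹ * MvPolynomial.eval (fun a => z a) (P i) = w i
  rw [heq]
  field_simp
end

section
/- Let 1 ≤ k ≤ m and let p : ℂⁿ → ℂᴺ be a polynomial map of degree m taking the sphere of radius r_j into the sphere of radius R_j for j = 1, …, k, where all r_j > 0 are distinct and R_j > 0. Then ‖p(z)‖² = b₀ + b₁(‖z‖² − r₁²) + b₂(‖z‖² − r₁²)(‖z‖² − r₂²) + ⋯ + b_{k−1}(‖z‖² − r₁²)⋯(‖z‖² − r_{k−1}²) + Q_k(z, z̄)(‖z‖² − r₁²)⋯(‖z‖² − r_k²), where b_j are the Newton divided differences of the data (r_j², R_j²) and Q_k is a real polynomial of bidegree (m−k, m−k). -/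
open MvPolynomial Metric

noncomputable def evalRP {n : ℕ} (Q : MvPolynomial (Fin n ⊕ Fin n) ℂ)
    (z : EuclideanSpace ℂ (Fin n)) : ℂ :=
  MvPolynomial.eval (Sum.elim (fun i => z i) (fun i => (starRingEnd ℂ) (z i))) Q

def BidegLE {n : ℕ} (Q : MvPolynomial (Fin n ⊕ Fin n) ℂ) (a b : ℕ) : Prop :=
  ∀ m ∈ Q.support, (∑ i : Fin n, m (Sum.inl i)) ≤ a ∧
    (∑ i : Fin n, m (Sum.inr i)) ≤ b

/-- Newton divided differences: `divDiff x y j ℓ = [y 0, …, y (j-1), y ℓ]`. -/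
noncomputable def divDiff (x y : ℕ → ℝ) : ℕ → ℕ → ℝ
  | 0, ℓ => y ℓ
  | (j+1), ℓ => (divDiff x y j ℓ - divDiff x y j j) / (x ℓ - x j)

/-- The Newton coefficients `b j = [y 0, …, y (j-1), y j]`. -/
noncomputable def newtonB (x y : ℕ → ℝ) (j : ℕ) : ℝ := divDiff x y j j

namespace Newton

lemma realpoints {σ : Type*} (Q : MvPolynomial σ ℂ)
    (h : ∀ v : σ → ℝ, eval (fun j => (v j : ℂ)) Q = 0) : Q = 0 := by
  classical
  have key : ∀ (f : ℂ → ℝ), f 0 = 0 → (∀ c x, f ((c:ℂ) * (x:ℝ)) = f c * x) →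
      (∀ a b, f (a+b) = f a + f b) →
      (∑ m ∈ Q.support, monomial m (f (Q.coeff m))) = 0 := by
    intro f hf0 hfmul hfadd
    have hfsum : ∀ s : Finset (σ →₀ ℕ), ∀ g : (σ →₀ ℕ) → ℂ,
        f (∑ d ∈ s, g d) = ∑ d ∈ s, f (g d) := by
      intro s g
      induction s using Finset.induction_on with
      | empty => simpa using hf0
      | @insert a s' hx ih => rw [Finset.sum_insert hx, Finset.sum_insert hx, hfadd, ih]
    apply MvPolynomial.funext (q := 0)
    intro v
    have h0 := h v
    rw [eval_eq] at h0
    have hre : f (∑ d ∈ Q.support, Q.coeff d * ∏ i ∈ d.support, ((v i : ℂ)) ^ d i) = 0 := by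
      rw [h0, hf0]
    rw [map_sum, map_zero]
    calc ∑ x ∈ Q.support, eval v (monomial x (f (Q.coeff x)))
        = ∑ d ∈ Q.support, f (Q.coeff d * ∏ i ∈ d.support, ((v i : ℂ)) ^ d i) := by
          apply Finset.sum_congr rfl
          intro d _
          rw [eval_monomial]
          have hc : (∏ i ∈ d.support, ((v i : ℂ)) ^ d i)
              = ((∏ i ∈ d.support, (v i) ^ d i : ℝ) : ℂ) := by push_cast; rfl
          rw [hc, hfmul]
          rfl
      _ = 0 := by rw [← hfsum, hre]
  have hre := key Complex.re rfl (by intro c x; simp) (by intro a b; simp)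
  have him := key Complex.im rfl (by intro c x; simp) (by intro a b; simp)
  ext m
  rw [coeff_zero]
  by_cases hm : m ∈ Q.support
  · have e1 : (Q.coeff m).re = 0 := by
      have := congrArg (coeff m) hre
      rwa [coeff_zero, coeff_sum, Finset.sum_eq_single m
        (by intro b _ hb; rw [coeff_monomial, if_neg hb])
        (by intro h'; exact absurd hm h'), coeff_monomial, if_pos rfl] at this
    have e2 : (Q.coeff m).im = 0 := by
      have := congrArg (coeff m) him
      rwa [coeff_zero, coeff_sum, Finset.sum_eq_single m
        (by intro b _ hb; rw [coeff_monomial, if_neg hb])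
        (by intro h'; exact absurd hm h'), coeff_monomial, if_pos rfl] at this
    exact Complex.ext e1 e2
  · simpa using hm

lemma eq_zero_of_evalRP {n : ℕ} (Q : MvPolynomial (Fin n ⊕ Fin n) ℂ)
    (h : ∀ z : EuclideanSpace ℂ (Fin n), evalRP Q z = 0) : Q = 0 := by
  classical
  set u : (Fin n ⊕ Fin n) → MvPolynomial (Fin n ⊕ Fin n) ℂ :=
    Sum.elim (fun i => X (Sum.inl i) + C Complex.I * X (Sum.inr i))
      (fun i => X (Sum.inl i) - C Complex.I * X (Sum.inr i)) with hu
  set u' : (Fin n ⊕ Fin n) → MvPolynomial (Fin n ⊕ Fin n) ℂ :=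
    Sum.elim (fun i => C (1/2 : ℂ) * (X (Sum.inl i) + X (Sum.inr i)))
      (fun i => C (Complex.I/2) * (X (Sum.inr i) - X (Sum.inl i))) with hu'
  have hQ0 : bind₁ u Q = 0 := by
    apply realpoints
    intro v
    have hb : (aeval fun j => ((v j : ℂ))) (bind₁ u Q)
        = (aeval fun j => (aeval fun j' => ((v j' : ℂ))) (u j)) Q := aeval_bind₁ _ u Q
    have heq : (fun j => (aeval fun j' => ((v j' : ℂ))) (u j))
        = Sum.elim (fun i => ((v (Sum.inl i) : ℂ) + Complex.I * v (Sum.inr i)))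
          (fun i => (starRingEnd ℂ) ((v (Sum.inl i) : ℂ) + Complex.I * v (Sum.inr i))) := by
      funext j
      cases j with
      | inl i => simp [hu]
      | inr i => simp [hu, Complex.ext_iff]
    have hz := h (WithLp.toLp 2 (fun i => (v (Sum.inl i) : ℂ) + Complex.I * v (Sum.inr i)))
    unfold evalRP at hz
    simp only [WithLp.ofLp_toLp] at hz
    calc (eval fun j => ((v j : ℂ))) (bind₁ u Q)
        = (aeval fun j => ((v j : ℂ))) (bind₁ u Q) := by rw [aeval_def, eval]; rfl
      _ = 0 := by rw [hb, heq]; rw [aeval_def]; exact hz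
  have hid : Q = bind₁ u' (bind₁ u Q) := by
    rw [bind₁_bind₁]
    have hgen : (fun i => bind₁ u' (u i)) = (X : Fin n ⊕ Fin n → MvPolynomial (Fin n ⊕ Fin n) ℂ) := by
      funext j
      cases j with
      | inl i =>
        simp only [hu, hu', Sum.elim_inl, Sum.elim_inr, map_add, map_add, map_sub, map_mul, bind₁_X_right,
          bind₁_C_right]
        simp only [← smul_eq_C_mul, smul_smul,
          show Complex.I * (Complex.I/2) = (-(2⁻¹):ℂ) from by
            rw [mul_div_assoc', Complex.I_mul_I]; norm_num]
        module
      | inr i =>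
        simp only [hu, hu', Sum.elim_inl, Sum.elim_inr, map_add, map_sub, map_mul, bind₁_X_right,
          bind₁_C_right]
        simp only [← smul_eq_C_mul, smul_smul,
          show Complex.I * (Complex.I/2) = (-(2⁻¹):ℂ) from by
            rw [mul_div_assoc', Complex.I_mul_I]; norm_num]
        module
    rw [hgen, bind₁_X_left]
    rfl
  rw [hid, hQ0, map_zero]

end Newton

namespace Newton

variable {n : ℕ}

noncomputable def tP (n : ℕ) : MvPolynomial (Fin n ⊕ Fin n) ℂ :=
  ∑ i : Fin n, X (Sum.inl i) * X (Sum.inr i)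

def degL (m : Fin n ⊕ Fin n →₀ ℕ) : ℕ := ∑ i : Fin n, m (Sum.inl i)
def degR (m : Fin n ⊕ Fin n →₀ ℕ) : ℕ := ∑ i : Fin n, m (Sum.inr i)

lemma bidegLE_iff {Q : MvPolynomial (Fin n ⊕ Fin n) ℂ} {a b : ℕ} :
    BidegLE Q a b ↔ ∀ m ∈ Q.support, degL m ≤ a ∧ degR m ≤ b := Iff.rfl

lemma degLR_sum (m : Fin n ⊕ Fin n →₀ ℕ) : (m.sum fun _ e => e) = degL m + degR m := by
  rw [Finsupp.sum_fintype _ _ (fun _ => rfl), Fintype.sum_sum_type]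
  rfl

lemma degL_add (m₁ m₂ : Fin n ⊕ Fin n →₀ ℕ) : degL (m₁ + m₂) = degL m₁ + degL m₂ := by
  unfold degL; simp [Finsupp.add_apply, Finset.sum_add_distrib]

lemma degR_add (m₁ m₂ : Fin n ⊕ Fin n →₀ ℕ) : degR (m₁ + m₂) = degR m₁ + degR m₂ := by
  unfold degR; simp [Finsupp.add_apply, Finset.sum_add_distrib]

lemma bideg_zero {a b : ℕ} : BidegLE (0 : MvPolynomial (Fin n ⊕ Fin n) ℂ) a b := by
  intro m hm; simp at hm

lemma bideg_mono {Q : MvPolynomial (Fin n ⊕ Fin n) ℂ} {a b a' b' : ℕ}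
    (h : BidegLE Q a b) (ha : a ≤ a') (hb : b ≤ b') : BidegLE Q a' b' := by
  intro m hm; exact ⟨(h m hm).1.trans ha, (h m hm).2.trans hb⟩

lemma bideg_add {Q₁ Q₂ : MvPolynomial (Fin n ⊕ Fin n) ℂ} {a b : ℕ}
    (h₁ : BidegLE Q₁ a b) (h₂ : BidegLE Q₂ a b) : BidegLE (Q₁ + Q₂) a b := by
  intro m hm
  rcases Finset.mem_union.mp (MvPolynomial.support_add hm) with h | h
  exacts [h₁ m h, h₂ m h]

lemma bideg_sum {ι : Type*} {s : Finset ι} {f : ι → MvPolynomial (Fin n ⊕ Fin n) ℂ} {a b : ℕ}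
    (h : ∀ i ∈ s, BidegLE (f i) a b) : BidegLE (∑ i ∈ s, f i) a b := by
  classical
  induction s using Finset.induction_on with
  | empty => simpa using bideg_zero
  | @insert j s' hj ih =>
    rw [Finset.sum_insert hj]
    exact bideg_add (h j (Finset.mem_insert_self j s'))
      (ih fun i hi => h i (Finset.mem_insert_of_mem hi))

lemma bideg_mul {Q₁ Q₂ : MvPolynomial (Fin n ⊕ Fin n) ℂ} {a b c d : ℕ}
    (h₁ : BidegLE Q₁ a b) (h₂ : BidegLE Q₂ c d) : BidegLE (Q₁ * Q₂) (a + c) (b + d) := by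
  classical
  intro m hm
  have := MvPolynomial.support_mul Q₁ Q₂ hm
  rw [Finset.mem_add] at this
  obtain ⟨m₁, hm₁, m₂, hm₂, rfl⟩ := this
  constructor
  · show degL (m₁ + m₂) ≤ a + c
    rw [degL_add]; exact add_le_add (h₁ m₁ hm₁).1 (h₂ m₂ hm₂).1
  · show degR (m₁ + m₂) ≤ b + d
    rw [degR_add]; exact add_le_add (h₁ m₁ hm₁).2 (h₂ m₂ hm₂).2

lemma bideg_C {c : ℂ} {a b : ℕ} : BidegLE (C c : MvPolynomial (Fin n ⊕ Fin n) ℂ) a b := by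
  intro m hm
  rw [C_apply] at hm
  have := MvPolynomial.support_monomial_subset hm
  rw [Finset.mem_singleton] at this
  subst this
  constructor <;> simp

lemma bideg_monomial {m₀ : Fin n ⊕ Fin n →₀ ℕ} {c : ℂ} :
    BidegLE (monomial m₀ c : MvPolynomial (Fin n ⊕ Fin n) ℂ) (degL m₀) (degR m₀) := by
  intro m hm
  have := MvPolynomial.support_monomial_subset hm
  rw [Finset.mem_singleton] at this
  subst this
  exact ⟨le_refl _, le_refl _⟩

lemma bideg_neg {Q : MvPolynomial (Fin n ⊕ Fin n) ℂ} {a b : ℕ} (h : BidegLE Q a b) :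
    BidegLE (-Q) a b := by
  intro m hm
  rw [MvPolynomial.support_neg] at hm
  exact h m hm

lemma bideg_t : BidegLE (tP n) 1 1 := by
  apply bideg_sum
  intro i _
  have h1 : BidegLE (X (Sum.inl i) : MvPolynomial (Fin n ⊕ Fin n) ℂ) 1 0 := by
    intro m hm
    rw [MvPolynomial.support_X, Finset.mem_singleton] at hm
    subst hm
    constructor <;> simp [Finsupp.single_apply]
  have h2 : BidegLE (X (Sum.inr i) : MvPolynomial (Fin n ⊕ Fin n) ℂ) 0 1 := by
    intro m hm
    rw [MvPolynomial.support_X, Finset.mem_singleton] at hm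
    subst hm
    constructor <;> simp [Finsupp.single_apply]
  exact bideg_mul h1 h2

lemma bideg_t_pow {i : ℕ} : BidegLE (tP n ^ i) i i := by
  induction i with
  | zero => simpa [pow_zero] using (bideg_C (c := 1))
  | succ i ih => rw [pow_succ]; exact bideg_mul ih bideg_t

lemma norm_sq_eq (z : EuclideanSpace ℂ (Fin n)) :
    (‖z‖^2 : ℝ) = ∑ i, Complex.normSq (z i) := by
  rw [EuclideanSpace.norm_eq, Real.sq_sqrt (by positivity)]
  congr 1
  funext i
  rw [Complex.sq_norm]

lemma evalRP_t (z : EuclideanSpace ℂ (Fin n)) : evalRP (tP n) z = ((‖z‖^2 : ℝ) : ℂ) := by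
  unfold evalRP tP
  rw [map_sum, norm_sq_eq]
  push_cast
  apply Finset.sum_congr rfl
  intro i _
  simp [Complex.mul_conj]

lemma evalRP_monomial (m : Fin n ⊕ Fin n →₀ ℕ) (c : ℂ) (z : EuclideanSpace ℂ (Fin n)) :
    evalRP (monomial m c) z =
      c * ((∏ i, z i ^ m (Sum.inl i)) * ∏ i, (starRingEnd ℂ) (z i) ^ m (Sum.inr i)) := by
  unfold evalRP
  rw [eval_monomial, Finsupp.prod_fintype _ _ (fun _ => pow_zero _), Fintype.prod_sum_type]
  rfl

end Newton

namespace Newton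
variable {n : ℕ}

lemma evalRP_monomial_smul (m : Fin n ⊕ Fin n →₀ ℕ) (c lam : ℂ) (z : EuclideanSpace ℂ (Fin n)) :
    evalRP (monomial m c) (lam • z) =
      lam ^ degL m * (starRingEnd ℂ) lam ^ degR m * evalRP (monomial m c) z := by
  rw [evalRP_monomial, evalRP_monomial]
  have h1 : (∏ i, (lam • z) i ^ m (Sum.inl i))
      = lam ^ degL m * ∏ i, z i ^ m (Sum.inl i) := by
    have : ∀ i : Fin n, (lam • z) i ^ m (Sum.inl i) = lam ^ m (Sum.inl i) * z i ^ m (Sum.inl i) := by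
      intro i
      rw [show (lam • z) i = lam * z i from rfl, mul_pow]
    rw [Finset.prod_congr rfl (fun i _ => this i), Finset.prod_mul_distrib,
      Finset.prod_pow_eq_pow_sum]
    rfl
  have h2 : (∏ i, (starRingEnd ℂ) ((lam • z) i) ^ m (Sum.inr i))
      = (starRingEnd ℂ) lam ^ degR m * ∏ i, (starRingEnd ℂ) (z i) ^ m (Sum.inr i) := by
    have : ∀ i : Fin n, (starRingEnd ℂ) ((lam • z) i) ^ m (Sum.inr i)
        = (starRingEnd ℂ) lam ^ m (Sum.inr i) * (starRingEnd ℂ) (z i) ^ m (Sum.inr i) := by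
      intro i
      rw [show (lam • z) i = lam * z i from rfl, map_mul, mul_pow]
    rw [Finset.prod_congr rfl (fun i _ => this i), Finset.prod_mul_distrib,
      Finset.prod_pow_eq_pow_sum]
    rfl
  rw [h1, h2]
  ring

lemma evalRP_Q_smul (Q : MvPolynomial (Fin n ⊕ Fin n) ℂ) (lam : ℂ)
    (z : EuclideanSpace ℂ (Fin n)) :
    evalRP Q (lam • z) = ∑ m ∈ Q.support,
      lam ^ degL m * (starRingEnd ℂ) lam ^ degR m * evalRP (monomial m (Q.coeff m)) z := by
  conv_lhs => rw [← support_sum_monomial_coeff Q]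
  unfold evalRP
  rw [map_sum]
  apply Finset.sum_congr rfl
  intro m _
  exact evalRP_monomial_smul m (Q.coeff m) lam z

lemma circle_infinite {c : ℝ} (hc : 0 < c) : {lam : ℂ | ‖lam‖ = c}.Infinite := by
  apply Set.infinite_of_injective_forall_mem
    (f := fun x : ℝ => ((c / Real.sqrt (1 + x^2) : ℝ) : ℂ) * (1 + (x:ℝ) * Complex.I))
  case hi =>
    intro x y hxy
    have hsx : (0:ℝ) < Real.sqrt (1 + x^2) := Real.sqrt_pos.mpr (by positivity)
    have hsy : (0:ℝ) < Real.sqrt (1 + y^2) := Real.sqrt_pos.mpr (by positivity)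
    rw [Complex.ext_iff] at hxy
    obtain ⟨h1, h2⟩ := hxy
    simp [Complex.mul_re, Complex.mul_im] at h1 h2
    have hs : Real.sqrt (1 + x^2) = Real.sqrt (1 + y^2) := by
      field_simp at h1
      exact h1.symm
    rw [hs] at h2
    exact mul_left_cancel₀ (ne_of_gt (div_pos hc hsy)) h2
  · intro x
    have hsx : (0:ℝ) < Real.sqrt (1 + x^2) := Real.sqrt_pos.mpr (by positivity)
    show ‖_‖ = c
    rw [norm_mul]
    have habs : ‖(1 + (x:ℝ) * Complex.I : ℂ)‖ = Real.sqrt (1 + x^2) := by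
      rw [show (1 + (x:ℝ) * Complex.I : ℂ) = ((1:ℝ):ℂ) + (x:ℝ) * Complex.I by push_cast; ring,
        Complex.norm_add_mul_I]
      norm_num
    rw [habs, Complex.norm_real]
    rw [Real.norm_of_nonneg (le_of_lt (div_pos hc hsx))]
    field_simp

lemma tP_ne_zero (hn : n ≠ 0) : tP n ≠ 0 := by
  intro h
  have := congrArg (eval (fun _ => (1:ℂ))) h
  simp [tP] at this
  exact hn this

lemma bideg_C_pow {c : ℂ} {k : ℕ} :
    BidegLE ((C c : MvPolynomial (Fin n ⊕ Fin n) ℂ)^k) 0 0 := by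
  rw [← map_pow]
  exact bideg_C

lemma division (Q : MvPolynomial (Fin n ⊕ Fin n) ℂ) (r : ℝ) (hr : 0 < r)
    {a b : ℕ} (hQ : BidegLE Q a b)
    (hvan : ∀ z : EuclideanSpace ℂ (Fin n), ‖z‖ = r → evalRP Q z = 0) :
    ∃ q, Q = (tP n - C ((r^2 : ℝ) : ℂ)) * q ∧ BidegLE q (a-1) (b-1) := by
  classical
  set u : ℂ := ((r^2 : ℝ) : ℂ) with hu
  have hu0 : u ≠ 0 := by
    rw [hu]
    exact_mod_cast (by positivity : (r:ℝ)^2 ≠ 0)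
  by_cases hn : n = 0
  · subst hn
    have ht0 : tP 0 = 0 := by simp [tP]
    refine ⟨C (-(u⁻¹)) * Q, ?_, ?_⟩
    · have hCC : (C u : MvPolynomial (Fin 0 ⊕ Fin 0) ℂ) * C (-(u⁻¹)) = -1 := by
        rw [← C_mul, mul_neg, mul_inv_cancel₀ hu0, map_neg, map_one]
      rw [ht0, zero_sub, neg_mul, ← mul_assoc, hCC]
      ring
    · intro m _
      constructor <;> simp
  -- main case
  set M := Q.totalDegree + 1 with hM
  have hdRlt : ∀ m ∈ Q.support, degR m < M ∧ degL m < M := by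
    intro m hm
    have h1 := MvPolynomial.le_totalDegree hm
    rw [degLR_sum] at h1
    omega
  set e : (Fin n ⊕ Fin n →₀ ℕ) → ℕ := fun m => M - degR m + degL m with he
  set t := tP n with ht
  -- Step 1 : per-fiber identity with global homogenization degree M
  have key : ∀ j : ℕ, ∑ m ∈ Q.support.filter (fun m => e m = j),
      (C u)^(degR m) * t^(M - degR m) * monomial m (Q.coeff m) = 0 := by
    intro j
    apply eq_zero_of_evalRP
    intro z
    unfold evalRP
    rw [map_sum]
    by_cases hz : z = (0 : EuclideanSpace ℂ (Fin n))
    · apply Finset.sum_eq_zero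
      intro m hm
      obtain ⟨hmQ, hme⟩ := Finset.mem_filter.mp hm
      have hlt := (hdRlt m hmQ).1
      rw [map_mul, map_mul, map_pow, map_pow]
      have h0 : eval (Sum.elim (fun i => z i) fun i => (starRingEnd ℂ) (z i)) t
          = ((‖z‖^2 : ℝ) : ℂ) := evalRP_t z
      rw [h0, hz]
      rw [norm_zero]
      rw [show ((((0:ℝ)^2 : ℝ)) : ℂ) = 0 by norm_num]
      rw [zero_pow (by omega)]
      ring
    · set s := ‖z‖ with hs
      have hspos : 0 < s := by
        rw [hs]; exact norm_pos_iff.mpr hz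
      set val : (Fin n ⊕ Fin n →₀ ℕ) → ℂ := fun m =>
        Q.coeff m * u^(degR m) * ((‖z‖^2 : ℝ) : ℂ)^(M - degR m) *
          ((∏ i, z i ^ m (Sum.inl i)) * ∏ i, (starRingEnd ℂ) (z i) ^ m (Sum.inr i)) with hval
      set p : Polynomial ℂ := ∑ m ∈ Q.support, Polynomial.C (val m) * Polynomial.X ^ (e m) with hp
      have hproot : ∀ lam : ℂ, ‖lam‖ = r / s → p.eval lam = 0 := by
        intro lam hlam
        have hnorm : ‖lam • z‖ = r := by
          rw [norm_smul, hlam, ← hs]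
          field_simp
        have hvan' := hvan (lam • z) hnorm
        rw [evalRP_Q_smul] at hvan'
        have hconj : lam * (starRingEnd ℂ) lam = (((r/s)^2 : ℝ) : ℂ) := by
          rw [Complex.mul_conj]
          norm_cast
          rw [← hlam]
          rw [Complex.normSq_eq_norm_sq]
        rw [hp, Polynomial.eval_finset_sum]
        calc ∑ m ∈ Q.support, (Polynomial.C (val m) * Polynomial.X ^ e m).eval lam
            = ((‖z‖^2 : ℝ) : ℂ)^M * lam^M * ∑ m ∈ Q.support,
                lam ^ degL m * (starRingEnd ℂ) lam ^ degR m *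
                  evalRP (monomial m (Q.coeff m)) z := by
              rw [Finset.mul_sum]
              apply Finset.sum_congr rfl
              intro m hm
              have hdR := (hdRlt m hm).1
              rw [Polynomial.eval_mul, Polynomial.eval_C, Polynomial.eval_pow, Polynomial.eval_X]
              rw [evalRP_monomial]
              have e1 : lam ^ M = lam ^ (M - degR m) * lam ^ degR m := by
                rw [← pow_add]; congr 1; omega
              have e2 : ((‖z‖^2:ℝ):ℂ)^M
                  = ((‖z‖^2:ℝ):ℂ)^(M - degR m) * ((‖z‖^2:ℝ):ℂ)^(degR m) := by
                rw [← pow_add]; congr 1; omega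
              have e3 : lam ^ (M - degR m) * lam ^ degL m = lam ^ (e m) := by
                rw [← pow_add]
              have e4 : lam ^ degR m * (starRingEnd ℂ) lam ^ degR m
                  = (((r/s)^2 : ℝ) : ℂ) ^ degR m := by
                rw [← mul_pow, hconj]
              have e5 : ((‖z‖^2:ℝ):ℂ) * (((r/s)^2 : ℝ) : ℂ) = u := by
                have hsne : (s:ℂ) ≠ 0 := Complex.ofReal_ne_zero.mpr hspos.ne'
                rw [hu, ← hs]
                push_cast
                field_simp
              calc (val m) * lam ^ e m
                  = Q.coeff m * u^(degR m) * ((‖z‖^2:ℝ):ℂ)^(M - degR m) *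
                    ((∏ i, z i ^ m (Sum.inl i)) * ∏ i, (starRingEnd ℂ) (z i) ^ m (Sum.inr i)) *
                      (lam ^ (M - degR m) * lam ^ degL m) := by rw [hval, e3]
                _ = ((‖z‖^2:ℝ):ℂ)^M * lam^M *
                    (lam ^ degL m * (starRingEnd ℂ) lam ^ degR m *
                      (Q.coeff m * ((∏ i, z i ^ m (Sum.inl i)) *
                        ∏ i, (starRingEnd ℂ) (z i) ^ m (Sum.inr i)))) := by
                  rw [e2, e1]
                  rw [show ((‖z‖^2:ℝ):ℂ)^(M - degR m) * ((‖z‖^2:ℝ):ℂ)^(degR m) *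
                      (lam ^ (M - degR m) * lam ^ degR m) *
                      (lam ^ degL m * (starRingEnd ℂ) lam ^ degR m *
                        (Q.coeff m * ((∏ i, z i ^ m (Sum.inl i)) *
                          ∏ i, (starRingEnd ℂ) (z i) ^ m (Sum.inr i))))
                      = Q.coeff m * (((‖z‖^2:ℝ):ℂ)^(degR m) *
                          (lam ^ degR m * (starRingEnd ℂ) lam ^ degR m)) *
                        ((‖z‖^2:ℝ):ℂ)^(M - degR m) *
                        ((∏ i, z i ^ m (Sum.inl i)) *
                          ∏ i, (starRingEnd ℂ) (z i) ^ m (Sum.inr i)) *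
                        (lam ^ (M - degR m) * lam ^ degL m) from by ring]
                  rw [e4, ← mul_pow, e5]
          _ = 0 := by rw [hvan', mul_zero]
      have hp0 : p = 0 := by
        apply Polynomial.eq_zero_of_infinite_isRoot
        apply Set.Infinite.mono ?_ (circle_infinite (div_pos hr hspos))
        intro lam hlam
        exact hproot lam hlam
      have hcoeff := congrArg (fun pp => Polynomial.coeff pp j) hp0
      simp only [Polynomial.coeff_zero] at hcoeff
      rw [hp, Polynomial.finset_sum_coeff] at hcoeff
      simp only [Polynomial.coeff_C_mul, Polynomial.coeff_X_pow, mul_ite, mul_one, mul_zero]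
        at hcoeff
      have hcoeff' : (∑ m ∈ Q.support, if e m = j then val m else 0) = 0 :=
        (Finset.sum_congr rfl (fun m _ => by
          by_cases h : e m = j
          · rw [if_pos h, if_pos h.symm]
          · rw [if_neg h, if_neg (fun hh => h hh.symm)])).trans hcoeff
      calc ∑ m ∈ Q.support.filter (fun m => e m = j),
            eval (Sum.elim (fun i => z i) fun i => (starRingEnd ℂ) (z i))
              ((C u)^(degR m) * t^(M - degR m) * monomial m (Q.coeff m))
          = ∑ m ∈ Q.support.filter (fun m => e m = j), val m := by
            apply Finset.sum_congr rfl
            intro m _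
            rw [map_mul, map_mul, map_pow, map_pow, eval_C]
            have h0 : eval (Sum.elim (fun i => z i) fun i => (starRingEnd ℂ) (z i)) t
                = ((‖z‖^2 : ℝ) : ℂ) := evalRP_t z
            have h1 : eval (Sum.elim (fun i => z i) fun i => (starRingEnd ℂ) (z i))
                (monomial m (Q.coeff m)) = Q.coeff m *
                  ((∏ i, z i ^ m (Sum.inl i)) * ∏ i, (starRingEnd ℂ) (z i) ^ m (Sum.inr i)) :=
              evalRP_monomial m (Q.coeff m) z
            rw [h0, h1, hval]
            ring
        _ = ∑ m ∈ Q.support, if e m = j then val m else 0 := Finset.sum_filter _ _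
        _ = 0 := hcoeff'
  -- Step 2 : improved identity with per-fiber homogenization degree B j
  have key2 : ∀ j : ℕ, ∑ m ∈ Q.support.filter (fun m => e m = j),
      (C u)^(degR m) * t^((Q.support.filter (fun m => e m = j)).sup degR - degR m) *
        monomial m (Q.coeff m) = 0 := by
    intro j
    set F := Q.support.filter (fun m => e m = j) with hF
    set B := F.sup degR with hB
    rcases Finset.eq_empty_or_nonempty F with hFe | hFne
    · rw [hFe]; simp
    · have hBM : B < M := by
        obtain ⟨m0, hm0, hBj⟩ := Finset.exists_mem_eq_sup F hFne degR
        rw [hB, hBj]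
        exact (hdRlt m0 (Finset.mem_filter.mp hm0).1).1
      have hfac : ∑ m ∈ F, (C u)^(degR m) * t^(M - degR m) * monomial m (Q.coeff m)
          = t^(M - B) * ∑ m ∈ F, (C u)^(degR m) * t^(B - degR m) * monomial m (Q.coeff m) := by
        rw [Finset.mul_sum]
        apply Finset.sum_congr rfl
        intro m hm
        have h1 : degR m ≤ B := Finset.le_sup hm
        rw [show t ^ (M - degR m) = t ^ (M - B) * t ^ (B - degR m) by
          rw [← pow_add]; congr 1; omega]
        ring
      have hk := key j
      rw [← hF] at hk
      rw [hfac] at hk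
      rcases mul_eq_zero.mp hk with h | h
      · exact absurd h (pow_ne_zero _ (tP_ne_zero hn))
      · exact h
  -- Step 3 : construction of q
  set geom : ℕ → MvPolynomial (Fin n ⊕ Fin n) ℂ := fun k =>
    ∑ i ∈ Finset.range k, t^i * (C u)^(k - 1 - i) with hgeom
  have hgm : ∀ k, geom k * (t - C u) = t^k - (C u)^k := fun k => geom_sum₂_mul t (C u) k
  set Fj : ℕ → Finset (Fin n ⊕ Fin n →₀ ℕ) :=
    fun j => Q.support.filter (fun m => e m = j) with hFj
  set B : ℕ → ℕ := fun j => (Fj j).sup degR with hB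
  set inner : ℕ → MvPolynomial (Fin n ⊕ Fin n) ℂ := fun j =>
    ∑ m ∈ Fj j, (C u)^(degR m) * (-(geom (B j - degR m))) * monomial m (Q.coeff m) with hinner
  have claim : ∀ j, (t - C u) * inner j
      = (C u)^(B j) * ∑ m ∈ Fj j, monomial m (Q.coeff m) := by
    intro j
    rw [hinner]
    simp only []
    rw [Finset.mul_sum]
    have hterm : ∀ m ∈ Fj j, (t - C u) *
        ((C u)^(degR m) * (-(geom (B j - degR m))) * monomial m (Q.coeff m))
        = (C u)^(B j) * monomial m (Q.coeff m)
          - (C u)^(degR m) * t^(B j - degR m) * monomial m (Q.coeff m) := by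
      intro m hm
      have h1 : degR m ≤ B j := Finset.le_sup hm
      have h2 : (C u : MvPolynomial (Fin n ⊕ Fin n) ℂ)^(degR m) * (C u)^(B j - degR m)
          = (C u)^(B j) := by
        rw [← pow_add]; congr 1; omega
      calc (t - C u) * ((C u)^(degR m) * (-(geom (B j - degR m))) * monomial m (Q.coeff m))
          = (C u)^(degR m) * (-(geom (B j - degR m) * (t - C u))) * monomial m (Q.coeff m) := by
            ring
        _ = (C u)^(degR m) * ((C u)^(B j - degR m) - t^(B j - degR m)) * monomial m (Q.coeff m) := by
            rw [hgm, neg_sub]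
        _ = (C u)^(degR m) * (C u)^(B j - degR m) * monomial m (Q.coeff m)
            - (C u)^(degR m) * t^(B j - degR m) * monomial m (Q.coeff m) := by ring
        _ = _ := by rw [h2]
    rw [Finset.sum_congr rfl hterm, Finset.sum_sub_distrib]
    have hk2 : ∑ m ∈ Fj j, (C u)^(degR m) * t^(B j - degR m) * monomial m (Q.coeff m) = 0 :=
      key2 j
    rw [hk2, sub_zero, ← Finset.mul_sum]
  set q : MvPolynomial (Fin n ⊕ Fin n) ℂ :=
    ∑ j ∈ Q.support.image e, C ((u^(B j))⁻¹) * inner j with hq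
  refine ⟨q, ?_, ?_⟩
  · conv_lhs => rw [← support_sum_monomial_coeff Q]
    rw [← Finset.sum_fiberwise_of_maps_to (g := e)
      (fun m hm => Finset.mem_image_of_mem e hm) (fun m => monomial m (Q.coeff m))]
    rw [hq, Finset.mul_sum]
    apply Finset.sum_congr rfl
    intro j hj
    rw [show (t - C u) * (C ((u^(B j))⁻¹) * inner j)
        = C ((u^(B j))⁻¹) * ((t - C u) * inner j) by ring]
    rw [claim j, ← mul_assoc, ← map_pow, ← C_mul, inv_mul_cancel₀ (pow_ne_zero _ hu0),
      map_one, one_mul]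
  · rw [hq]
    apply bideg_sum
    intro j hj
    have h1 : BidegLE (inner j) (a-1) (b-1) := by
      rw [hinner]
      simp only []
      apply bideg_sum
      intro m hm
      have hmQ : m ∈ Q.support := Finset.mem_of_mem_filter m hm
      have hdRB : degR m ≤ B j := Finset.le_sup hm
      rcases Nat.eq_zero_or_pos (B j - degR m) with hk | hk
      · rw [hk]
        rw [show geom 0 = 0 by rw [hgeom]; simp]
        rw [neg_zero, mul_zero, zero_mul]
        exact bideg_zero
      · obtain ⟨m0, hm0, hBj⟩ := Finset.exists_mem_eq_sup (Fj j) ⟨m, hm⟩ degR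
        have hBj' : B j = degR m0 := hBj
        have hem : e m = j := (Finset.mem_filter.mp hm).2
        have hem0 : e m0 = j := (Finset.mem_filter.mp hm0).2
        have hm0Q : m0 ∈ Q.support := Finset.mem_of_mem_filter m0 hm0
        have hL : degL m ≤ a := (hQ m hmQ).1
        have hL0 : degL m0 ≤ a := (hQ m0 hm0Q).1
        have hR : degR m ≤ b := (hQ m hmQ).2
        have hR0 : degR m0 ≤ b := (hQ m0 hm0Q).2
        have hMm := hdRlt m hmQ
        have hMm0 := hdRlt m0 hm0Q
        have harith : degL m + degR m0 = degL m0 + degR m := by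
          rw [he] at hem hem0
          simp only [] at hem hem0
          omega
        have hgeomb : BidegLE (geom (B j - degR m)) (B j - degR m - 1) (B j - degR m - 1) := by
          rw [hgeom]
          simp only []
          apply bideg_sum
          intro i hi
          have hi' := Finset.mem_range.mp hi
          exact bideg_mono (bideg_mul (bideg_t_pow) (bideg_C_pow)) (by omega) (by omega)
        have hterm := bideg_mul (bideg_mul (bideg_C_pow (c := u) (k := degR m))
          (bideg_neg hgeomb)) (bideg_monomial (m₀ := m) (c := Q.coeff m))
        apply bideg_mono hterm
        · omega
        · omega
    exact bideg_mono (bideg_mul (bideg_C (c := (u^(B j))⁻¹) (a := 0) (b := 0)) h1)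
      (by omega) (by omega)

end Newton

namespace Newton
variable {n N : ℕ}

lemma evalRP_sub (A B : MvPolynomial (Fin n ⊕ Fin n) ℂ) (z : EuclideanSpace ℂ (Fin n)) :
    evalRP (A - B) z = evalRP A z - evalRP B z := map_sub _ A B

lemma evalRP_mul (A B : MvPolynomial (Fin n ⊕ Fin n) ℂ) (z : EuclideanSpace ℂ (Fin n)) :
    evalRP (A * B) z = evalRP A z * evalRP B z := map_mul _ A B

lemma evalRP_C (c : ℂ) (z : EuclideanSpace ℂ (Fin n)) :
    evalRP (C c : MvPolynomial (Fin n ⊕ Fin n) ℂ) z = c := eval_C _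

noncomputable def sigma (n : ℕ) :
    MvPolynomial (Fin n ⊕ Fin n) ℂ →+* MvPolynomial (Fin n ⊕ Fin n) ℂ :=
  (rename (Sum.swap : Fin n ⊕ Fin n → Fin n ⊕ Fin n)).toRingHom.comp
    (MvPolynomial.map (starRingEnd ℂ))

lemma sigma_apply (Q : MvPolynomial (Fin n ⊕ Fin n) ℂ) :
    sigma n Q = rename Sum.swap (MvPolynomial.map (starRingEnd ℂ) Q) := rfl

lemma sigma_C (c : ℂ) : sigma n (C c) = C ((starRingEnd ℂ) c) := by
  rw [sigma_apply, map_C, rename_C]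

lemma sigma_tP : sigma n (tP n) = tP n := by
  rw [sigma_apply, tP, map_sum, map_sum]
  apply Finset.sum_congr rfl
  intro i _
  rw [map_mul, map_mul, map_X, map_X, rename_X, rename_X]
  simp [mul_comm]

lemma conj_comp_pt (z : EuclideanSpace ℂ (Fin n)) :
    (starRingEnd ℂ) ∘ (Sum.elim (fun i => z i) (fun i => (starRingEnd ℂ) (z i)))
      = (Sum.elim (fun i => z i) (fun i => (starRingEnd ℂ) (z i))) ∘ Sum.swap := by
  funext j
  cases j with
  | inl i => simp
  | inr i => simp

lemma evalRP_sigma (Q : MvPolynomial (Fin n ⊕ Fin n) ℂ) (z : EuclideanSpace ℂ (Fin n)) :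
    evalRP (sigma n Q) z = (starRingEnd ℂ) (evalRP Q z) := by
  unfold evalRP
  rw [sigma_apply, eval_rename, eval_map]
  have h1 : (eval (Sum.elim (fun i => z i) fun i => (starRingEnd ℂ) (z i))) Q
      = eval₂ (RingHom.id ℂ) (Sum.elim (fun i => z i) fun i => (starRingEnd ℂ) (z i)) Q := rfl
  rw [h1, eval₂_comp_left (starRingEnd ℂ)]
  rw [← conj_comp_pt]
  rw [RingHom.comp_id]

lemma im_eq_zero_of_sigma {Q : MvPolynomial (Fin n ⊕ Fin n) ℂ} (h : sigma n Q = Q)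
    (z : EuclideanSpace ℂ (Fin n)) : (evalRP Q z).im = 0 := by
  have h1 := evalRP_sigma Q z
  rw [h] at h1
  have h2 := congrArg Complex.im h1
  simp at h2
  linarith

lemma tsub_ne (u : ℂ) (hu : u ≠ 0) : tP n - C u ≠ 0 := by
  intro h
  have := congrArg (eval (fun _ => (0:ℂ))) h
  simp [tP] at this
  exact hu this

noncomputable def Q0 (P : Fin N → MvPolynomial (Fin n) ℂ) : MvPolynomial (Fin n ⊕ Fin n) ℂ :=
  ∑ i : Fin N, rename Sum.inl (P i) * rename Sum.inr (MvPolynomial.map (starRingEnd ℂ) (P i))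

lemma swap_comp_inl : (Sum.swap ∘ Sum.inl : Fin n → Fin n ⊕ Fin n) = Sum.inr := by
  funext i; simp

lemma swap_comp_inr : (Sum.swap ∘ Sum.inr : Fin n → Fin n ⊕ Fin n) = Sum.inl := by
  funext i; simp

lemma conj_conj_map (p : MvPolynomial (Fin n) ℂ) :
    MvPolynomial.map (starRingEnd ℂ) (MvPolynomial.map (starRingEnd ℂ) p) = p := by
  rw [map_map]
  have : (starRingEnd ℂ).comp (starRingEnd ℂ) = RingHom.id ℂ := by
    ext c; simp
  rw [this, map_id]

lemma sigma_Q0 (P : Fin N → MvPolynomial (Fin n) ℂ) : sigma n (Q0 P) = Q0 P := by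
  unfold Q0
  rw [map_sum]
  apply Finset.sum_congr rfl
  intro i _
  rw [map_mul]
  have h1 : sigma n (rename Sum.inl (P i))
      = rename Sum.inr (MvPolynomial.map (starRingEnd ℂ) (P i)) := by
    rw [sigma_apply, map_rename, rename_rename, swap_comp_inl]
  have h2 : sigma n (rename Sum.inr (MvPolynomial.map (starRingEnd ℂ) (P i)))
      = rename Sum.inl (P i) := by
    rw [sigma_apply, map_rename, rename_rename, swap_comp_inr, conj_conj_map]
  rw [h1, h2, mul_comm]

lemma evalRP_Q0 (P : Fin N → MvPolynomial (Fin n) ℂ) (z : EuclideanSpace ℂ (Fin n)) :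
    evalRP (Q0 P) z = ((‖evalPoly P z‖^2 : ℝ) : ℂ) := by
  unfold evalRP Q0
  rw [map_sum, norm_sq_eq]
  push_cast
  apply Finset.sum_congr rfl
  intro i _
  rw [map_mul, eval_rename, eval_rename, eval_map]
  have h1 : (Sum.elim (fun i => z i) fun i => (starRingEnd ℂ) (z i)) ∘ Sum.inl
      = fun j => z j := rfl
  have h2 : (Sum.elim (fun i => z i) fun i => (starRingEnd ℂ) (z i)) ∘ Sum.inr
      = fun j => (starRingEnd ℂ) (z j) := rfl
  rw [h1, h2]
  have h3 : (starRingEnd ℂ) (eval (fun j => z j) (P i))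
      = eval₂ (starRingEnd ℂ) ((starRingEnd ℂ) ∘ (fun j => z j)) (P i) := by
    have h5 := eval₂_comp_left (starRingEnd ℂ) (RingHom.id ℂ) (fun j => z j) (P i)
    rw [RingHom.comp_id] at h5
    exact h5
  have h4 : eval₂ (starRingEnd ℂ) (fun j => (starRingEnd ℂ) (z j)) (P i)
      = (starRingEnd ℂ) (eval (fun j => z j) (P i)) := h3.symm
  rw [h4]
  rw [Complex.mul_conj]
  rfl

lemma bideg_renameL {p : MvPolynomial (Fin n) ℂ} {m : ℕ} (hp : p.totalDegree ≤ m) :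
    BidegLE (rename Sum.inl p : MvPolynomial (Fin n ⊕ Fin n) ℂ) m 0 := by
  classical
  intro m' hm'
  rw [support_rename_of_injective Sum.inl_injective, Finset.mem_image] at hm'
  obtain ⟨d, hd, rfl⟩ := hm'
  constructor
  · show degL _ ≤ m
    have h1 : degL (Finsupp.mapDomain Sum.inl d) = ∑ i, d i := by
      unfold degL
      apply Finset.sum_congr rfl
      intro i _
      exact Finsupp.mapDomain_apply Sum.inl_injective d i
    rw [h1]
    have h2 := MvPolynomial.le_totalDegree hd
    rw [Finsupp.sum_fintype _ _ (fun _ => rfl)] at h2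
    omega
  · show degR _ ≤ 0
    have h1 : degR (Finsupp.mapDomain Sum.inl d) = 0 := by
      unfold degR
      apply Finset.sum_eq_zero
      intro i _
      apply Finsupp.mapDomain_notin_range
      rintro ⟨w, hw⟩
      simp at hw
    omega

lemma bideg_renameR {p : MvPolynomial (Fin n) ℂ} {m : ℕ} (hp : p.totalDegree ≤ m) :
    BidegLE (rename Sum.inr (MvPolynomial.map (starRingEnd ℂ) p)
      : MvPolynomial (Fin n ⊕ Fin n) ℂ) 0 m := by
  classical
  intro m' hm'
  rw [support_rename_of_injective Sum.inr_injective, Finset.mem_image] at hm'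
  obtain ⟨d, hd, rfl⟩ := hm'
  have hd' : d ∈ p.support := MvPolynomial.support_map_subset _ _ hd
  constructor
  · show degL _ ≤ 0
    have h1 : degL (Finsupp.mapDomain Sum.inr d) = 0 := by
      unfold degL
      apply Finset.sum_eq_zero
      intro i _
      apply Finsupp.mapDomain_notin_range
      rintro ⟨w, hw⟩
      simp at hw
    omega
  · show degR _ ≤ m
    have h1 : degR (Finsupp.mapDomain Sum.inr d) = ∑ i, d i := by
      unfold degR
      apply Finset.sum_congr rfl
      intro i _
      exact Finsupp.mapDomain_apply Sum.inr_injective d i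
    rw [h1]
    have h2 := MvPolynomial.le_totalDegree hd'
    rw [Finsupp.sum_fintype _ _ (fun _ => rfl)] at h2
    omega

lemma bideg_Q0 (P : Fin N → MvPolynomial (Fin n) ℂ) {m : ℕ}
    (hdeg : ∀ i, (P i).totalDegree ≤ m) : BidegLE (Q0 P) m m := by
  unfold Q0
  apply bideg_sum
  intro i _
  have := bideg_mul (bideg_renameL (hdeg i)) (bideg_renameR (hdeg i))
  simpa using this

end Newton


/-- the Newton-form decomposition of `‖p(z)‖²` for a polynomial
`k`-fold sphere map `p` of degree `m`, with the divided differences of the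
data `(r j ^ 2, R j ^ 2)` as coefficients and remainder `Q_k` of bidegree at
most `(m−k, m−k)`. -/
theorem poly_newton_decomposition {n N : ℕ} (k m : ℕ) (hk : 1 ≤ k) (hkm : k ≤ m)
    (P : Fin N → MvPolynomial (Fin n) ℂ)
    (hdeg : ∀ i, (P i).totalDegree ≤ m)
    (r R : ℕ → ℝ)
    (hrpos : ∀ j < k, 0 < r j) (hRpos : ∀ j < k, 0 < R j)
    (hrinj : ∀ j < k, ∀ ℓ < k, r j = r ℓ → j = ℓ)
    (hsphere : ∀ j < k, ∀ z : EuclideanSpace ℂ (Fin n), ‖z‖ = r j →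
      ‖evalPoly P z‖ = R j) :
    ∃ Qk : MvPolynomial (Fin n ⊕ Fin n) ℂ,
      (∀ z : EuclideanSpace ℂ (Fin n), (evalRP Qk z).im = 0) ∧
      BidegLE Qk (m - k) (m - k) ∧
      ∀ z : EuclideanSpace ℂ (Fin n),
        ‖evalPoly P z‖ ^ 2 =
          (∑ j ∈ Finset.range k,
            newtonB (fun i => r i ^ 2) (fun i => R i ^ 2) j *
              ∏ i ∈ Finset.range j, (‖z‖ ^ 2 - r i ^ 2)) +
          (evalRP Qk z).re * ∏ j ∈ Finset.range k, (‖z‖ ^ 2 - r j ^ 2) := by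
  classical
  have main : ∀ j, j ≤ k → ∃ Qj : MvPolynomial (Fin n ⊕ Fin n) ℂ,
      Newton.sigma n Qj = Qj ∧ BidegLE Qj (m - j) (m - j) ∧
      (∀ ℓ, j ≤ ℓ → ℓ < k → ∀ z : EuclideanSpace ℂ (Fin n), ‖z‖ = r ℓ →
        evalRP Qj z = ((divDiff (fun i => r i ^ 2) (fun i => R i ^ 2) j ℓ : ℝ) : ℂ)) ∧
      (∀ z : EuclideanSpace ℂ (Fin n), ((‖evalPoly P z‖^2 : ℝ) : ℂ) =
        (∑ i ∈ Finset.range j, ((newtonB (fun i => r i ^ 2) (fun i => R i ^ 2) i : ℝ) : ℂ) *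
          ∏ l ∈ Finset.range i, ((‖z‖^2 - r l ^ 2 : ℝ) : ℂ)) +
        evalRP Qj z * ∏ l ∈ Finset.range j, ((‖z‖^2 - r l ^ 2 : ℝ) : ℂ)) := by
    intro j
    induction j with
    | zero =>
      intro _
      refine ⟨Newton.Q0 P, Newton.sigma_Q0 P, ?_, ?_, ?_⟩
      · simpa using Newton.bideg_Q0 P hdeg
      · intro ℓ _ hℓ z hz
        rw [Newton.evalRP_Q0, hsphere ℓ hℓ z hz]
        simp [divDiff]
      · intro z
        simp [Newton.evalRP_Q0]
    | succ j ih =>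
      intro hjk
      have hjk' : j < k := hjk
      obtain ⟨Qj, hherm, hdegj, hsph, hid⟩ := ih (le_of_lt hjk')
      set b : ℝ := divDiff (fun i => r i ^ 2) (fun i => R i ^ 2) j j with hb
      set Q' : MvPolynomial (Fin n ⊕ Fin n) ℂ := Qj - C ((b : ℝ) : ℂ) with hQ'
      have hvanQ' : ∀ z : EuclideanSpace ℂ (Fin n), ‖z‖ = r j → evalRP Q' z = 0 := by
        intro z hz
        rw [hQ', Newton.evalRP_sub, Newton.evalRP_C, hsph j (le_refl j) hjk' z hz, hb]
        ring
      have hdegQ' : BidegLE Q' (m - j) (m - j) := by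
        rw [hQ', sub_eq_add_neg]
        exact Newton.bideg_add hdegj (Newton.bideg_neg Newton.bideg_C)
      obtain ⟨q, hqeq, hqdeg⟩ := Newton.division Q' (r j) (hrpos j hjk') hdegQ' hvanQ'
      have hune : (((r j)^2 : ℝ) : ℂ) ≠ 0 := by
        have h0 := hrpos j hjk'
        exact_mod_cast (by positivity : (r j)^2 ≠ 0)
      have htne : Newton.tP n - C (((r j)^2 : ℝ) : ℂ) ≠ 0 := Newton.tsub_ne _ hune
      have hermq : Newton.sigma n q = q := by
        have h1 : Newton.sigma n Q' = Q' := by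
          rw [hQ', map_sub, hherm, Newton.sigma_C, Complex.conj_ofReal]
        have h2 := congrArg (Newton.sigma n) hqeq
        simp only [map_mul, map_sub] at h2
        rw [h1, Newton.sigma_tP, Newton.sigma_C, Complex.conj_ofReal, hqeq] at h2
        exact (mul_left_cancel₀ htne h2).symm
      have hqz : ∀ z : EuclideanSpace ℂ (Fin n),
          evalRP Q' z = ((‖z‖^2 - (r j)^2 : ℝ) : ℂ) * evalRP q z := by
        intro z
        rw [hqeq, Newton.evalRP_mul, Newton.evalRP_sub, Newton.evalRP_C, Newton.evalRP_t]
        push_cast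
        ring
      have hsph' : ∀ ℓ, j+1 ≤ ℓ → ℓ < k → ∀ z : EuclideanSpace ℂ (Fin n), ‖z‖ = r ℓ →
          evalRP q z = ((divDiff (fun i => r i ^ 2) (fun i => R i ^ 2) (j+1) ℓ : ℝ) : ℂ) := by
        intro ℓ h1 h2 z hz
        have hne : r ℓ ^ 2 - r j ^ 2 ≠ 0 := by
          have h3 : r ℓ ≠ r j := by
            intro hh
            have := hrinj ℓ h2 j hjk' hh
            omega
          have h4 := hrpos ℓ h2
          have h5 := hrpos j hjk'
          intro hh
          apply h3
          nlinarith
        have hne' : ((r ℓ ^ 2 - r j ^ 2 : ℝ) : ℂ) ≠ 0 := by exact_mod_cast hne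
        have heq := hqz z
        rw [hQ', Newton.evalRP_sub, Newton.evalRP_C, hsph ℓ (by omega) h2 z hz, hz] at heq
        apply mul_left_cancel₀ hne'
        rw [← heq]
        rw [show divDiff (fun i => r i ^ 2) (fun i => R i ^ 2) (j+1) ℓ
            = (divDiff (fun i => r i ^ 2) (fun i => R i ^ 2) j ℓ - b) / (r ℓ ^ 2 - r j ^ 2)
            from rfl]
        rw [show ((((divDiff (fun i => r i ^ 2) (fun i => R i ^ 2) j ℓ - b)
            / (r ℓ ^ 2 - r j ^ 2)) : ℝ) : ℂ)
            = (((divDiff (fun i => r i ^ 2) (fun i => R i ^ 2) j ℓ - b : ℝ)) : ℂ)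
              / ((r ℓ ^ 2 - r j ^ 2 : ℝ) : ℂ) by push_cast; ring]
        rw [mul_div_cancel₀ _ hne']
        push_cast
        ring
      have hid' : ∀ z : EuclideanSpace ℂ (Fin n), ((‖evalPoly P z‖^2 : ℝ) : ℂ) =
          (∑ i ∈ Finset.range (j+1), ((newtonB (fun i => r i ^ 2) (fun i => R i ^ 2) i : ℝ) : ℂ) *
            ∏ l ∈ Finset.range i, ((‖z‖^2 - r l ^ 2 : ℝ) : ℂ)) +
          evalRP q z * ∏ l ∈ Finset.range (j+1), ((‖z‖^2 - r l ^ 2 : ℝ) : ℂ) := by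
        intro z
        have hQjz : evalRP Qj z = ((b : ℝ) : ℂ) + ((‖z‖^2 - (r j)^2 : ℝ) : ℂ) * evalRP q z := by
          have h6 := hqz z
          rw [hQ', Newton.evalRP_sub, Newton.evalRP_C] at h6
          linear_combination h6
        rw [hid z, hQjz, Finset.sum_range_succ, Finset.prod_range_succ]
        rw [show newtonB (fun i => r i ^ 2) (fun i => R i ^ 2) j = b from rfl]
        ring
      refine ⟨q, hermq, ?_, hsph', hid'⟩
      have : m - j - 1 = m - (j + 1) := by omega
      rw [← this]
      exact hqdeg
  obtain ⟨Qk, hherm, hdegk, _, hid⟩ := main k (le_refl k)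
  refine ⟨Qk, fun z => Newton.im_eq_zero_of_sigma hherm z, hdegk, ?_⟩
  intro z
  have h1 := hid z
  have h2 : evalRP Qk z = (((evalRP Qk z).re : ℝ) : ℂ) := by
    have h3 := Newton.im_eq_zero_of_sigma hherm z
    exact Complex.ext rfl (by simp [h3])
  rw [h2] at h1
  exact_mod_cast h1
end

section
/- Let p : ℂⁿ → ℂᴺ be a polynomial map of degree m that maps m distinct zero-centered spheres of radii 0 < r₁ < ⋯ < r_m into zero-centered spheres (of radii R₁, …, R_m > 0 respectively). Then ‖p(z)‖² is equal to a real polynomial in the single variable ‖z‖²; in particular, p maps every zero-centered sphere into a zero-centered sphere. -/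
open MvPolynomial Metric

section Aux

open Finset Polynomial

lemma eval_homog_mul {σ : Type*} {φ : MvPolynomial σ ℂ} {k : ℕ}
    (h : φ.IsHomogeneous k) (c : ℂ) (z : σ → ℂ) :
    MvPolynomial.eval (fun j => c * z j) φ = c ^ k * MvPolynomial.eval z φ := by
  rw [MvPolynomial.eval_eq, MvPolynomial.eval_eq, Finset.mul_sum]
  refine Finset.sum_congr rfl fun d hd => ?_
  have hdeg : ∑ i ∈ d.support, d i = k := by
    have := h (MvPolynomial.mem_support_iff.mp hd)
    simpa [Finsupp.weight, Finsupp.linearCombination, Finsupp.sum] using this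
  calc MvPolynomial.coeff d φ * ∏ i ∈ d.support, (c * z i) ^ d i
      = MvPolynomial.coeff d φ *
        ((∏ i ∈ d.support, c ^ d i) * ∏ i ∈ d.support, z i ^ d i) := by
        rw [← Finset.prod_mul_distrib]; simp [mul_pow]
    _ = c ^ k * (MvPolynomial.coeff d φ * ∏ i ∈ d.support, z i ^ d i) := by
        rw [Finset.prod_pow_eq_pow_sum, hdeg]; ring


lemma circle_infinite_s9 (r : ℝ) (hr : 0 < r) : {c : ℂ | ‖c‖ = r}.Infinite := by
  have hinj : Set.InjOn (fun t : ℝ => (r : ℂ) * Complex.exp (t * Complex.I)) (Set.Icc 0 Real.pi) := by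
    intro s hs t ht hst
    simp only at hst
    have h1 : Complex.exp (s * Complex.I) = Complex.exp (t * Complex.I) :=
      mul_left_cancel₀ (by exact_mod_cast hr.ne') hst
    have h2 : Real.cos s = Real.cos t := by
      have := congrArg Complex.re h1
      simpa [Complex.exp_ofReal_mul_I_re] using this
    exact Real.injOn_cos hs ht h2
  refine ((Set.Icc_infinite (by positivity : (0:ℝ) < Real.pi)).image hinj).mono ?_
  rintro c ⟨t, -, rfl⟩
  simp only [Set.mem_setOf_eq, norm_mul, Complex.norm_exp_ofReal_mul_I, mul_one,
    Complex.norm_real, Real.norm_eq_abs, abs_of_pos hr]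

lemma Gpoly_eq (m : ℕ) (a : ℕ → ℕ → ℂ) (r R : ℝ) (hr : 0 < r)
    (h : ∀ c : ℂ, ‖c‖ = r →
      ∑ k ∈ range (m+1), ∑ l ∈ range (m+1),
        c ^ k * (starRingEnd ℂ) c ^ l * a k l = ((R^2 : ℝ) : ℂ)) :
    (∑ k ∈ range (m+1), ∑ l ∈ range (m+1),
        Polynomial.C (a k l * (r : ℂ) ^ (2*l)) * Polynomial.X ^ (m + k - l) : Polynomial ℂ)
      = Polynomial.C ((R^2 : ℝ) : ℂ) * Polynomial.X ^ m := by
  have key : ∀ c : ℂ, ‖c‖ = r →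
      Polynomial.eval c (∑ k ∈ range (m+1), ∑ l ∈ range (m+1),
        Polynomial.C (a k l * (r : ℂ) ^ (2*l)) * Polynomial.X ^ (m + k - l) : Polynomial ℂ)
      = Polynomial.eval c (Polynomial.C ((R^2 : ℝ) : ℂ) * Polynomial.X ^ m) := by
    intro c hc
    have hc0 : c ≠ 0 := by
      intro h0; rw [h0] at hc; simp at hc; exact hr.ne' hc.symm
    have hcc : (starRingEnd ℂ) c = ((r : ℂ))^2 / c := by
      rw [eq_div_iff hc0, mul_comm, Complex.mul_conj]
      norm_cast
      rw [Complex.normSq_eq_norm_sq, hc]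
    have lhs : Polynomial.eval c (∑ k ∈ range (m+1), ∑ l ∈ range (m+1),
        Polynomial.C (a k l * (r : ℂ) ^ (2*l)) * Polynomial.X ^ (m + k - l) : Polynomial ℂ)
        = c ^ m * ∑ k ∈ range (m+1), ∑ l ∈ range (m+1),
            c ^ k * (starRingEnd ℂ) c ^ l * a k l := by
      rw [Polynomial.eval_finset_sum, Finset.mul_sum]
      refine Finset.sum_congr rfl fun k hk => ?_
      rw [Polynomial.eval_finset_sum, Finset.mul_sum]
      refine Finset.sum_congr rfl fun l hl => ?_
      have hlm : l ≤ m + k := by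
        have := mem_range.mp hl; omega
      rw [hcc]
      simp only [Polynomial.eval_mul, Polynomial.eval_C, Polynomial.eval_pow, Polynomial.eval_X]
      rw [div_pow, pow_sub₀ c hc0 hlm]
      have : ((r:ℂ)^2) ^ l = (r : ℂ) ^ (2*l) := by rw [← pow_mul]
      field_simp
      ring
    rw [lhs, h c hc]
    simp [mul_comm]
  have : (∑ k ∈ range (m+1), ∑ l ∈ range (m+1),
        Polynomial.C (a k l * (r : ℂ) ^ (2*l)) * Polynomial.X ^ (m + k - l) : Polynomial ℂ)
      - Polynomial.C ((R^2 : ℝ) : ℂ) * Polynomial.X ^ m = 0 := by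
    apply Polynomial.eq_zero_of_infinite_isRoot
    refine (circle_infinite_s9 r hr).mono ?_
    intro c hc
    simp only [Set.mem_setOf_eq, Polynomial.IsRoot, Polynomial.eval_sub]
    rw [key c hc, sub_self]
  exact sub_eq_zero.mp this

lemma coeffs_of_circle (m : ℕ) (a : ℕ → ℕ → ℂ)
    (hsym : ∀ k l, a l k = (starRingEnd ℂ) (a k l))
    (r R : Fin m → ℝ)
    (hrpos : ∀ j, 0 < r j) (hrmono : StrictMono r)
    (h : ∀ (j : Fin m) (c : ℂ), ‖c‖ = r j →
      ∑ k ∈ range (m+1), ∑ l ∈ range (m+1),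
        c ^ k * (starRingEnd ℂ) c ^ l * a k l = ((R j ^ 2 : ℝ) : ℂ)) :
    (∀ k l, k ≤ m → l ≤ m → k ≠ l → a k l = 0) ∧
    (∀ j : Fin m, ∑ k ∈ range (m+1), a k k * (((r j)^2 : ℝ) : ℂ) ^ k = ((R j ^ 2 : ℝ) : ℂ)) := by
  have hG : ∀ j : Fin m, (∑ k ∈ range (m+1), ∑ l ∈ range (m+1),
      Polynomial.C (a k l * (r j : ℂ) ^ (2*l)) * Polynomial.X ^ (m + k - l) : Polynomial ℂ)
      = Polynomial.C ((R j ^ 2 : ℝ) : ℂ) * Polynomial.X ^ m :=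
    fun j => Gpoly_eq m a (r j) (R j) (hrpos j) (h j)
  have hinj : Function.Injective (fun j : Fin m => (((r j)^2 : ℝ) : ℂ)) := by
    intro i j hij
    simp only [Complex.ofReal_inj] at hij
    have h2 : r i = r j := by nlinarith [hrpos i, hrpos j]
    exact hrmono.injective h2
  have hcoeff : ∀ (j : Fin m) (e : ℕ),
      (∑ k ∈ range (m+1), ∑ l ∈ range (m+1),
        (if m + k - l = e then a k l * (r j : ℂ) ^ (2*l) else 0))
      = if e = m then ((R j ^ 2 : ℝ) : ℂ) else 0 := by
    intro j e
    have h1 := congrArg (fun p => Polynomial.coeff p e) (hG j)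
    simp only [Polynomial.coeff_C_mul, Polynomial.coeff_X_pow, mul_ite, mul_one, mul_zero] at h1
    rw [Polynomial.finset_sum_coeff] at h1
    rw [← h1]
    refine Finset.sum_congr rfl fun k hk => ?_
    rw [Polynomial.finset_sum_coeff]
    refine Finset.sum_congr rfl fun l hl => ?_
    rw [Polynomial.coeff_C_mul, Polynomial.coeff_X_pow]
    split
    · rename_i hc; rw [if_pos hc.symm, mul_one]
    · rename_i hc; rw [if_neg (fun hh => hc hh.symm), mul_zero]
  have hoff : ∀ d, 1 ≤ d → ∀ l0, l0 + d ≤ m → a (l0 + d) l0 = 0 := by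
    intro d hd l0 hl0
    have hm1 : 1 ≤ m := by omega
    set Hd : Polynomial ℂ :=
      ∑ l ∈ range m, Polynomial.C (if l + d ≤ m then a (l+d) l else 0) * Polynomial.X ^ l with hHd
    have heval : ∀ j : Fin m, Hd.eval (((r j)^2 : ℝ) : ℂ) = 0 := by
      intro j
      have h1 := hcoeff j (m + d)
      rw [if_neg (by omega)] at h1
      rw [Finset.sum_comm] at h1
      have h2 : ∀ l ∈ range (m+1),
          (∑ k ∈ range (m+1), if m + k - l = m + d then a k l * (r j:ℂ)^(2*l) else 0)
          = if l + d ≤ m then a (l+d) l * (r j:ℂ)^(2*l) else 0 := by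
        intro l hl'
        have hlm : l ≤ m := by simpa [Nat.lt_succ_iff] using mem_range.mp hl'
        have hstep : ∀ k ∈ range (m+1),
            (if m + k - l = m + d then a k l * (r j:ℂ)^(2*l) else 0)
            = if k = l + d then a k l * (r j:ℂ)^(2*l) else 0 := by
          intro k hk
          by_cases hcase : m + k - l = m + d
          · rw [if_pos hcase, if_pos (by omega)]
          · rw [if_neg hcase, if_neg (by omega)]
        rw [Finset.sum_congr rfl hstep,
          Finset.sum_ite_eq' (range (m+1)) (l+d) (fun k => a k l * (r j:ℂ)^(2*l))]
        simp [Nat.lt_succ_iff]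
      rw [Finset.sum_congr rfl h2] at h1
      rw [Finset.sum_range_succ, if_neg (by omega), add_zero] at h1
      rw [hHd, Polynomial.eval_finset_sum]
      refine Eq.trans (Finset.sum_congr rfl fun l' hl' => ?_) h1
      simp only [Polynomial.eval_mul, Polynomial.eval_C, Polynomial.eval_pow, Polynomial.eval_X]
      have hpow : (((r j)^2 : ℝ) : ℂ) ^ l' = ((r j : ℂ))^(2*l') := by push_cast; rw [← pow_mul]
      rw [hpow]
      split <;> simp
    have hdeg : Hd.natDegree < m := by
      have h3 : Hd.natDegree ≤ m - 1 := by
        rw [hHd]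
        apply Polynomial.natDegree_sum_le_of_forall_le
        intro l hl'
        refine le_trans (Polynomial.natDegree_C_mul_X_pow_le _ _) ?_
        have := mem_range.mp hl'; omega
      omega
    have hzero : Hd = 0 :=
      Polynomial.eq_zero_of_natDegree_lt_card_of_eval_eq_zero Hd hinj heval
        (by simpa using hdeg)
    have h4 := congrArg (fun p => Polynomial.coeff p l0) hzero
    simp only [hHd, Polynomial.coeff_zero, Polynomial.finset_sum_coeff,
      Polynomial.coeff_C_mul, Polynomial.coeff_X_pow, mul_ite, mul_one, mul_zero,
      Finset.sum_ite_eq, Finset.sum_ite_eq', Finset.mem_range] at h4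
    rw [if_pos (by omega : l0 < m), if_pos hl0] at h4
    exact h4
  constructor
  · intro k l hk hl hkl
    rcases Nat.lt_or_ge k l with hlt | hge
    · have : a (k + (l - k)) k = 0 := hoff (l - k) (by omega) k (by omega)
      rw [show k + (l - k) = l by omega] at this
      rw [hsym k l] at this
      have h6 := congrArg (starRingEnd ℂ) this
      simpa using h6
    · have hlt : l < k := by omega
      have : a (l + (k - l)) l = 0 := hoff (k - l) (by omega) l (by omega)
      rwa [show l + (k - l) = k by omega] at this
  · intro j
    have h1 := hcoeff j m
    rw [if_pos rfl] at h1
    have h2 : ∀ k ∈ range (m+1),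
        (∑ l ∈ range (m+1), if m + k - l = m then a k l * (r j:ℂ)^(2*l) else 0)
        = a k k * (r j:ℂ)^(2*k) := by
      intro k hk
      have hkm : k ≤ m := by simpa [Nat.lt_succ_iff] using mem_range.mp hk
      have hstep : ∀ l ∈ range (m+1),
          (if m + k - l = m then a k l * (r j:ℂ)^(2*l) else 0)
          = if l = k then a k l * (r j:ℂ)^(2*l) else 0 := by
        intro l hl'
        have hlm : l ≤ m := by simpa [Nat.lt_succ_iff] using mem_range.mp hl'
        by_cases hcase : m + k - l = m
        · rw [if_pos hcase, if_pos (by omega)]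
        · rw [if_neg hcase, if_neg (by omega)]
      rw [Finset.sum_congr rfl hstep,
        Finset.sum_ite_eq' (range (m+1)) k (fun l => a k l * (r j:ℂ)^(2*l))]
      simp [Nat.lt_succ_iff, hkm]
    rw [Finset.sum_congr rfl h2] at h1
    rw [← h1]
    refine Finset.sum_congr rfl fun k hk => ?_
    congr 1
    push_cast
    rw [← pow_mul]

end Aux

open Finset in
/-- a polynomial map of degree `m` taking `m` distinct
zero-centered spheres to zero-centered spheres has `‖p(z)‖²` equal to a
polynomial in `‖z‖²`; in particular it takes every zero-centered sphere
to a zero-centered sphere. -/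
theorem poly_m_fold_is_infty_fold {n N : ℕ} (m : ℕ)
    (P : Fin N → MvPolynomial (Fin n) ℂ)
    (hdeg : ∀ i, (P i).totalDegree ≤ m)
    (r R : Fin m → ℝ)
    (hrpos : ∀ j, 0 < r j) (hRpos : ∀ j, 0 < R j)
    (hrmono : StrictMono r)
    (hsphere : ∀ (j : Fin m) (z : EuclideanSpace ℂ (Fin n)), ‖z‖ = r j →
      ‖evalPoly P z‖ = R j) :
    (∃ Q : Polynomial ℝ, ∀ z : EuclideanSpace ℂ (Fin n),
      ‖evalPoly P z‖ ^ 2 = Polynomial.eval (‖z‖ ^ 2) Q) ∧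
    ∀ s : ℝ, 0 < s → ∃ Rs : ℝ,
      ∀ z : EuclideanSpace ℂ (Fin n), ‖z‖ = s → ‖evalPoly P z‖ = Rs := by
  -- It suffices to find Q
  suffices hQ : ∃ Q : Polynomial ℝ, ∀ z : EuclideanSpace ℂ (Fin n),
      ‖evalPoly P z‖ ^ 2 = Polynomial.eval (‖z‖ ^ 2) Q by
    obtain ⟨Q, hQ⟩ := hQ
    refine ⟨⟨Q, hQ⟩, fun s _ => ⟨Real.sqrt (Polynomial.eval (s^2) Q), fun z hz => ?_⟩⟩
    rw [← hz, ← hQ z, Real.sqrt_sq (norm_nonneg _)]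
  by_cases hn : n = 0
  · subst hn
    refine ⟨Polynomial.C (‖evalPoly P 0‖^2), fun z => ?_⟩
    have hz : z = 0 := Subsingleton.elim z 0
    rw [hz, Polynomial.eval_C]
  -- main case
  set q : ℕ → EuclideanSpace ℂ (Fin n) → Fin N → ℂ :=
    fun k z i => eval (fun j => z j) (homogeneousComponent k (P i)) with hq
  set A : ℕ → ℕ → EuclideanSpace ℂ (Fin n) → ℂ :=
    fun k l z => ∑ i, q k z i * (starRingEnd ℂ) (q l z i) with hA
  -- decomposition of P
  have hPsum : ∀ i, P i = ∑ k ∈ range (m+1), homogeneousComponent k (P i) := by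
    intro i
    conv_lhs => rw [← sum_homogeneousComponent (P i)]
    have hsub : range ((P i).totalDegree + 1) ⊆ range (m+1) :=
      Finset.range_subset_range.mpr (by have := hdeg i; omega)
    refine Finset.sum_subset hsub ?_
    intro k _ hk'
    refine homogeneousComponent_eq_zero k (P i) ?_
    simp only [mem_range, not_lt] at hk'
    have := hdeg i
    omega
  have hdecomp : ∀ (i : Fin N) (z : EuclideanSpace ℂ (Fin n)) (c : ℂ),
      eval (fun j => c * z j) (P i) = ∑ k ∈ range (m+1), c ^ k * q k z i := by
    intro i z c
    conv_lhs => rw [hPsum i]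
    rw [map_sum]
    exact Finset.sum_congr rfl fun k _ =>
      eval_homog_mul (homogeneousComponent_isHomogeneous k (P i)) c (fun j => z j)
  -- norm expansion
  have hnorm : ∀ (z : EuclideanSpace ℂ (Fin n)) (c : ℂ),
      ((‖evalPoly P (WithLp.toLp 2 (fun j => c * z j))‖^2 : ℝ) : ℂ)
      = ∑ k ∈ range (m+1), ∑ l ∈ range (m+1),
          c ^ k * ((starRingEnd ℂ) c) ^ l * A k l z := by
    intro z c
    have h0 : ((‖evalPoly P (WithLp.toLp 2 (fun j => c * z j))‖^2 : ℝ) : ℂ)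
        = ∑ i : Fin N, (evalPoly P (WithLp.toLp 2 (fun j => c * z j)) i) *
            (starRingEnd ℂ) (evalPoly P (WithLp.toLp 2 (fun j => c * z j)) i) := by
      rw [EuclideanSpace.norm_eq, Real.sq_sqrt (by positivity)]
      push_cast
      refine Finset.sum_congr rfl fun i _ => ?_
      rw [Complex.mul_conj, Complex.normSq_eq_norm_sq]
      norm_cast
    rw [h0]
    have h1 : ∀ i : Fin N, evalPoly P (WithLp.toLp 2 (fun j => c * z j)) i
        = ∑ k ∈ range (m+1), c ^ k * q k z i := fun i => hdecomp i z c
    calc (∑ i : Fin N, (evalPoly P (WithLp.toLp 2 (fun j => c * z j)) i) *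
            (starRingEnd ℂ) (evalPoly P (WithLp.toLp 2 (fun j => c * z j)) i))
        = ∑ i : Fin N, ∑ k ∈ range (m+1), ∑ l ∈ range (m+1),
            c ^ k * ((starRingEnd ℂ) c) ^ l * (q k z i * (starRingEnd ℂ) (q l z i)) := by
          refine Finset.sum_congr rfl fun i _ => ?_
          rw [h1 i, map_sum, Finset.sum_mul_sum]
          refine Finset.sum_congr rfl fun k _ => Finset.sum_congr rfl fun l _ => ?_
          rw [map_mul, map_pow]
          ring
      _ = ∑ k ∈ range (m+1), ∑ l ∈ range (m+1),
            c ^ k * ((starRingEnd ℂ) c) ^ l * A k l z := by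
          rw [Finset.sum_comm]
          refine Finset.sum_congr rfl fun k _ => ?_
          rw [Finset.sum_comm]
          refine Finset.sum_congr rfl fun l _ => ?_
          rw [hA, Finset.mul_sum]
  -- symmetry of A
  have hsym : ∀ (z : EuclideanSpace ℂ (Fin n)) k l, A l k z = (starRingEnd ℂ) (A k l z) := by
    intro z k l
    rw [hA, map_sum]
    refine Finset.sum_congr rfl fun i _ => ?_
    simp only [map_mul, Complex.conj_conj]
    ring
  -- sphere condition for unit vectors
  have hAunit : ∀ u : EuclideanSpace ℂ (Fin n), ‖u‖ = 1 →
      ∀ (j : Fin m) (c : ℂ), ‖c‖ = r j →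
      ∑ k ∈ range (m+1), ∑ l ∈ range (m+1),
        c ^ k * (starRingEnd ℂ) c ^ l * A k l u = ((R j ^ 2 : ℝ) : ℂ) := by
    intro u hu j c hc
    have hcu : (WithLp.toLp 2 (fun j' => c * u j') : EuclideanSpace ℂ (Fin n)) = c • u :=
      rfl
    rw [← hnorm u c, hcu]
    have hnormcu : ‖c • u‖ = r j := by
      rw [norm_smul, hu, mul_one, hc]
    rw [hsphere j _ hnormcu]
  -- off-diagonal vanishing and diagonal interpolation for each unit vector
  have hmain : ∀ u : EuclideanSpace ℂ (Fin n), ‖u‖ = 1 →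
      (∀ k l, k ≤ m → l ≤ m → k ≠ l → A k l u = 0) ∧
      (∀ j : Fin m, ∑ k ∈ range (m+1), A k k u * (((r j)^2 : ℝ) : ℂ) ^ k
        = ((R j ^ 2 : ℝ) : ℂ)) :=
    fun u hu => coeffs_of_circle m (fun k l => A k l u) (fun k l => hsym u k l)
      r R hrpos hrmono (hAunit u hu)
  -- real diagonal values
  set b : ℕ → EuclideanSpace ℂ (Fin n) → ℝ :=
    fun k z => ∑ i, Complex.normSq (q k z i) with hb
  have hAdiag : ∀ k z, A k k z = ((b k z : ℝ) : ℂ) := by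
    intro k z
    rw [hA, hb]
    push_cast
    exact Finset.sum_congr rfl fun i _ => (Complex.mul_conj (q k z i))
  -- the candidate polynomials
  set D : EuclideanSpace ℂ (Fin n) → Polynomial ℝ :=
    fun u => ∑ k ∈ range (m+1), Polynomial.C (b k u) * Polynomial.X ^ k with hD
  have hDeval : ∀ u t, (D u).eval t = ∑ k ∈ range (m+1), b k u * t ^ k := by
    intro u t
    rw [hD, Polynomial.eval_finset_sum]
    simp
  have hDr : ∀ u : EuclideanSpace ℂ (Fin n), ‖u‖ = 1 →
      ∀ j : Fin m, (D u).eval ((r j)^2) = R j ^ 2 := by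
    intro u hu j
    have h2 := (hmain u hu).2 j
    rw [← Complex.ofReal_inj]
    rw [← h2, hDeval]
    push_cast
    refine Finset.sum_congr rfl fun k _ => ?_
    rw [hAdiag]
    try push_cast
    try ring
  -- b 0 is independent of the point
  have hb0 : ∀ z w, b 0 z = b 0 w := by
    intro z w
    rw [hb]
    refine Finset.sum_congr rfl fun i _ => ?_
    rw [hq]
    simp [homogeneousComponent_zero]
  -- D is independent of the unit vector
  have hDindep : ∀ u v : EuclideanSpace ℂ (Fin n), ‖u‖ = 1 → ‖v‖ = 1 → D u = D v := by
    intro u v hu hv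
    have hdeg' : (D u - D v).natDegree < m + 1 := by
      have h1 : ∀ w, (D w).natDegree ≤ m := by
        intro w
        rw [hD]
        apply Polynomial.natDegree_sum_le_of_forall_le
        intro k hk
        refine le_trans (Polynomial.natDegree_C_mul_X_pow_le _ _) ?_
        have := mem_range.mp hk; omega
      have := Polynomial.natDegree_sub_le (D u) (D v)
      have := h1 u; have := h1 v
      omega
    set s : Finset ℝ := insert 0 (Finset.image (fun j => (r j)^2) Finset.univ) with hs
    have hcard : m + 1 ≤ s.card := by
      rw [hs]
      rw [Finset.card_insert_of_notMem]
      · rw [Finset.card_image_of_injective]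
        · simp
        · intro i j hij
          have hij' : r i ^ 2 = r j ^ 2 := hij
          have : r i = r j := by nlinarith [hrpos i, hrpos j, hij']
          exact hrmono.injective this
      · simp only [Finset.mem_image, not_exists]
        intro j _
        nlinarith [hrpos j]
    have hzero : D u - D v = 0 := by
      apply Polynomial.eq_zero_of_natDegree_lt_card_of_eval_eq_zero' _ s
      · intro x hx
        rw [hs] at hx
        rcases Finset.mem_insert.mp hx with rfl | hx
        · rw [Polynomial.eval_sub, hDeval, hDeval]
          have : ∀ w, (∑ k ∈ range (m+1), b k w * (0:ℝ) ^ k) = b 0 w := by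
            intro w
            rw [Finset.sum_eq_single 0] <;> simp +contextual
          rw [this, this, hb0 u v, sub_self]
        · obtain ⟨j, -, rfl⟩ := Finset.mem_image.mp hx
          rw [Polynomial.eval_sub, hDr u hu j, hDr v hv j, sub_self]
      · omega
    have := sub_eq_zero.mp hzero
    exact this
  -- fix a base unit vector
  set u₀ : EuclideanSpace ℂ (Fin n) := EuclideanSpace.single ⟨0, Nat.pos_of_ne_zero hn⟩ 1
    with hu₀def
  have hu₀ : ‖u₀‖ = 1 := by rw [hu₀def, EuclideanSpace.norm_single]; simp
  refine ⟨D u₀, fun z => ?_⟩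
  -- decompose z = c • u
  obtain ⟨u, hu1, hzu⟩ : ∃ u : EuclideanSpace ℂ (Fin n), ‖u‖ = 1 ∧
      (WithLp.toLp 2 (fun j => ((‖z‖ : ℝ) : ℂ) * u j) : EuclideanSpace ℂ (Fin n)) = z := by
    by_cases hz : z = 0
    · refine ⟨u₀, hu₀, ?_⟩
      ext j'
      rw [hz]
      simp [hz]
    · refine ⟨((‖z‖ : ℝ) : ℂ)⁻¹ • z, ?_, ?_⟩
      · rw [norm_smul]
        have : ‖z‖ ≠ 0 := norm_ne_zero_iff.mpr hz
        simp [this]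
      · ext j'
        have hznz : ((‖z‖ : ℝ) : ℂ) ≠ 0 := by
          simp [norm_ne_zero_iff.mpr hz]
        have happ : ((((‖z‖ : ℝ) : ℂ))⁻¹ • z) j' = (((‖z‖ : ℝ) : ℂ))⁻¹ * z j' := rfl
        show ((‖z‖ : ℝ) : ℂ) * ((((‖z‖ : ℝ) : ℂ))⁻¹ • z) j' = z j'
        rw [happ, ← mul_assoc, mul_inv_cancel₀ hznz, one_mul]
  rw [← Complex.ofReal_inj]
  have step1 := hnorm u ((‖z‖ : ℝ) : ℂ)
  rw [hzu] at step1
  rw [step1]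
  have hoffd := (hmain u hu1).1
  have hdiagsum : ∑ k ∈ range (m+1), ∑ l ∈ range (m+1),
      ((‖z‖ : ℝ) : ℂ) ^ k * ((starRingEnd ℂ) ((‖z‖ : ℝ) : ℂ)) ^ l * A k l u
      = ∑ k ∈ range (m+1), ((‖z‖^2 : ℝ) : ℂ) ^ k * A k k u := by
    refine Finset.sum_congr rfl fun k hk => ?_
    rw [Finset.sum_eq_single k]
    · rw [Complex.conj_ofReal]
      push_cast
      ring
    · intro l hl hlk
      rw [hoffd k l (by have := mem_range.mp hk; omega) (by have := mem_range.mp hl; omega)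
        (fun h => hlk h.symm), mul_zero]
    · intro hk'
      exact absurd hk hk'
  rw [hdiagsum]
  rw [hDindep u₀ u hu₀ hu1, hDeval]
  push_cast
  refine Finset.sum_congr rfl fun k _ => ?_
  rw [hAdiag]
  try push_cast
  try ring
end

section
/- A polynomial map p : ℂⁿ → ℂᴺ that maps infinitely many distinct zero-centered spheres into zero-centered spheres maps every zero-centered sphere into a zero-centered sphere, i.e., ‖p(z)‖² is a polynomial in ‖z‖². -/
open MvPolynomial Metric

namespace PolyInftyAux

open Polynomial

/-- The one-variable polynomial `t ↦ p(t • w)` in direction `w`. -/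
noncomputable def dirPoly {n : ℕ} (w : EuclideanSpace ℂ (Fin n))
    (p : MvPolynomial (Fin n) ℂ) : Polynomial ℂ :=
  MvPolynomial.eval₂ Polynomial.C (fun j => Polynomial.C (w j) * Polynomial.X) p

lemma dirPoly_eval {n : ℕ} (w : EuclideanSpace ℂ (Fin n))
    (p : MvPolynomial (Fin n) ℂ) (t : ℂ) :
    (dirPoly w p).eval t = MvPolynomial.eval (fun j => t * w j) p := by
  unfold dirPoly
  rw [show (Polynomial.eval t) = (Polynomial.evalRingHom t : Polynomial ℂ → ℂ) from rfl,
    MvPolynomial.eval₂_comp_left (Polynomial.evalRingHom t)]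
  have h : (Polynomial.evalRingHom t).comp Polynomial.C = RingHom.id ℂ := by
    ext x; simp
  have h2 : (⇑(evalRingHom t) ∘ fun j => Polynomial.C (w j) * Polynomial.X)
      = fun j => t * w j := by
    funext j
    simp only [Function.comp_apply, coe_evalRingHom, Polynomial.eval_mul,
      Polynomial.eval_C, Polynomial.eval_X]
    ring
  rw [h, h2, MvPolynomial.eval₂_id]

lemma eval_map_star (p : Polynomial ℂ) (t : ℝ) :
    (p.map (starRingEnd ℂ)).eval (t : ℂ) = starRingEnd ℂ (p.eval (t : ℂ)) := by
  induction p using Polynomial.induction_on with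
  | C a => simp
  | add p q hp hq => simp [hp, hq]
  | monomial k a h => simp [← Complex.ofReal_pow]

/-- The complex polynomial whose value at real `t` is `‖p(t • w)‖²`. -/
noncomputable def normPoly {n N : ℕ} (P : Fin N → MvPolynomial (Fin n) ℂ)
    (w : EuclideanSpace ℂ (Fin n)) : Polynomial ℂ :=
  ∑ i, dirPoly w (P i) * (dirPoly w (P i)).map (starRingEnd ℂ)

lemma norm_sq_eq_sum {N : ℕ} (x : EuclideanSpace ℂ (Fin N)) :
    ((‖x‖ ^ 2 : ℝ) : ℂ) = ∑ i, x i * starRingEnd ℂ (x i) := by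
  have h1 : ‖x‖ ^ 2 = ∑ i, ‖x i‖ ^ 2 := by
    rw [EuclideanSpace.norm_eq]
    exact Real.sq_sqrt (Finset.sum_nonneg fun i _ => sq_nonneg _)
  rw [h1]
  push_cast
  refine Finset.sum_congr rfl fun i _ => ?_
  rw [Complex.mul_conj]
  norm_cast
  rw [← Complex.sq_norm]

lemma normPoly_eval {n N : ℕ} (P : Fin N → MvPolynomial (Fin n) ℂ)
    (w : EuclideanSpace ℂ (Fin n)) (t : ℝ) :
    (normPoly P w).eval (t : ℂ) = ((‖evalPoly P (t • w)‖ ^ 2 : ℝ) : ℂ) := by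
  have hz : (fun j => ((t : ℂ)) * w j) = fun j => (t • w : EuclideanSpace ℂ (Fin n)) j := by
    funext j
    simp [Complex.real_smul]
  rw [norm_sq_eq_sum, normPoly, Polynomial.eval_finset_sum]
  refine Finset.sum_congr rfl fun i _ => ?_
  rw [Polynomial.eval_mul, eval_map_star, dirPoly_eval, hz]
  rfl

lemma normPoly_conj {n N : ℕ} (P : Fin N → MvPolynomial (Fin n) ℂ)
    (w : EuclideanSpace ℂ (Fin n)) :
    (normPoly P w).map (starRingEnd ℂ) = normPoly P w := by
  have hcc : (starRingEnd ℂ).comp (starRingEnd ℂ) = RingHom.id ℂ := by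
    ext x; simp
  unfold normPoly
  rw [Polynomial.map_sum]
  refine Finset.sum_congr rfl fun i _ => ?_
  rw [Polynomial.map_mul, Polynomial.map_map, hcc, Polynomial.map_id, mul_comm]

lemma coeff_comp_neg_X (p : Polynomial ℂ) (k : ℕ) :
    (p.comp (-Polynomial.X)).coeff k = (-1) ^ k * p.coeff k := by
  induction p using Polynomial.induction_on' with
  | add p q hp hq => simp [add_comp, hp, hq, mul_add]
  | monomial m a =>
    rw [monomial_comp, neg_pow, show ((-1 : Polynomial ℂ)) = Polynomial.C (-1) by simp,
      ← Polynomial.C_pow, ← mul_assoc, mul_comm (Polynomial.C a), mul_assoc,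
      Polynomial.coeff_C_mul, Polynomial.coeff_C_mul, Polynomial.coeff_X_pow,
      Polynomial.coeff_monomial]
    by_cases h : k = m
    · subst h; simp
    · simp [h, Ne.symm h]

lemma sum_range_two_mul (M : ℕ) (f : ℕ → ℂ) :
    ∑ k ∈ Finset.range (2 * M), f k
      = ∑ m ∈ Finset.range M, (f (2 * m) + f (2 * m + 1)) := by
  induction M with
  | zero => simp
  | succ M ih =>
    rw [Finset.sum_range_succ, ← ih, mul_add, mul_one,
      show 2 * M + 2 = (2 * M + 1) + 1 from rfl, Finset.sum_range_succ,
      Finset.sum_range_succ]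
    ring

end PolyInftyAux

/-- a polynomial map taking infinitely many zero-centered
spheres to zero-centered spheres takes every zero-centered sphere to a
zero-centered sphere, i.e., `‖p(z)‖²` is a polynomial in `‖z‖²`. -/
theorem poly_infty_fold {n N : ℕ}
    (P : Fin N → MvPolynomial (Fin n) ℂ)
    (hinf : {r : ℝ | 0 < r ∧ ∃ R : ℝ,
      ∀ z : EuclideanSpace ℂ (Fin n), ‖z‖ = r → ‖evalPoly P z‖ = R}.Infinite) :
    (∃ Q : Polynomial ℝ, ∀ z : EuclideanSpace ℂ (Fin n),
      ‖evalPoly P z‖ ^ 2 = Polynomial.eval (‖z‖ ^ 2) Q) ∧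
    ∀ s : ℝ, 0 < s → ∃ Rs : ℝ,
      ∀ z : EuclideanSpace ℂ (Fin n), ‖z‖ = s → ‖evalPoly P z‖ = Rs := by
  classical
  rcases Nat.eq_zero_or_pos n with hn | hn
  · subst hn
    have hz0 : ∀ z : EuclideanSpace ℂ (Fin 0), z = 0 := fun z => PiLp.ext fun i => i.elim0
    refine ⟨⟨Polynomial.C (‖evalPoly P 0‖ ^ 2), fun z => by rw [hz0 z]; simp⟩,
      fun s hs => ⟨‖evalPoly P 0‖, fun z _ => by rw [hz0 z]⟩⟩
  · set w₀ : EuclideanSpace ℂ (Fin n) := EuclideanSpace.single ⟨0, hn⟩ (1 : ℂ) with hw₀def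
    have hw₀ : ‖w₀‖ = 1 := by rw [hw₀def, EuclideanSpace.norm_single]; simp
    set S := PolyInftyAux.normPoly P w₀ with hSdef
    have hCinf : ((fun r : ℝ => (r : ℂ)) '' {r : ℝ | 0 < r ∧ ∃ R : ℝ,
        ∀ z : EuclideanSpace ℂ (Fin n), ‖z‖ = r → ‖evalPoly P z‖ = R}).Infinite :=
      hinf.image (Complex.ofReal_injective.injOn)
    have hB : ∀ w : EuclideanSpace ℂ (Fin n), ‖w‖ = 1 →
        PolyInftyAux.normPoly P w = S := by
      intro w hw
      apply Polynomial.eq_of_infinite_eval_eq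
      refine Set.Infinite.mono ?_ hCinf
      rintro x ⟨r, ⟨hr, R, hR⟩, rfl⟩
      have h1 : ‖(r • w : EuclideanSpace ℂ (Fin n))‖ = r := by
        rw [norm_smul, hw, Real.norm_eq_abs, abs_of_pos hr, mul_one]
      have h2 : ‖(r • w₀ : EuclideanSpace ℂ (Fin n))‖ = r := by
        rw [norm_smul, hw₀, Real.norm_eq_abs, abs_of_pos hr, mul_one]
      show Polynomial.eval _ _ = Polynomial.eval _ _
      rw [PolyInftyAux.normPoly_eval, hSdef, PolyInftyAux.normPoly_eval,
        hR _ h1, hR _ h2]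
    have hkey : ∀ z : EuclideanSpace ℂ (Fin n),
        ((‖evalPoly P z‖ ^ 2 : ℝ) : ℂ) = S.eval ((‖z‖ : ℝ) : ℂ) := by
      intro z
      rcases eq_or_ne z 0 with rfl | hz
      · have h := PolyInftyAux.normPoly_eval P w₀ 0
        rw [zero_smul] at h
        rw [norm_zero, Complex.ofReal_zero]
        exact h.symm
      · set w : EuclideanSpace ℂ (Fin n) := ‖z‖⁻¹ • z with hwdef
        have hw : ‖w‖ = 1 := by
          rw [hwdef, norm_smul, Real.norm_eq_abs,
            abs_of_pos (inv_pos.mpr (norm_pos_iff.mpr hz)),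
            inv_mul_cancel₀ (norm_ne_zero_iff.mpr hz)]
        have hzw : (‖z‖ : ℝ) • w = z := by
          rw [hwdef, smul_smul, mul_inv_cancel₀ (norm_ne_zero_iff.mpr hz), one_smul]
        have h := PolyInftyAux.normPoly_eval P w ‖z‖
        rw [hzw, hB w hw] at h
        exact h.symm
    have hcomp : S.comp (-Polynomial.X) = S := by
      apply Polynomial.eq_of_infinite_eval_eq
      refine Set.Infinite.mono ?_ hCinf
      rintro x ⟨r, ⟨hr, _⟩, rfl⟩
      show Polynomial.eval _ _ = Polynomial.eval _ _
      rw [Polynomial.eval_comp]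
      simp only [Polynomial.eval_neg, Polynomial.eval_X]
      rw [show (-(r : ℂ)) = (((-r : ℝ) : ℝ) : ℂ) by push_cast; ring,
        hSdef, PolyInftyAux.normPoly_eval P w₀ (-r)]
      have hn1 : ‖((-r : ℝ) • w₀ : EuclideanSpace ℂ (Fin n))‖ = r := by
        rw [norm_smul, hw₀, Real.norm_eq_abs, abs_neg, abs_of_pos hr, mul_one]
      rw [← hSdef, hkey ((-r : ℝ) • w₀), hn1]
    have hodd : ∀ k, Odd k → S.coeff k = 0 := by
      intro k hk
      have h := congrArg (fun p => Polynomial.coeff p k) hcomp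
      rw [PolyInftyAux.coeff_comp_neg_X, hk.neg_one_pow] at h
      linear_combination (-1 / 2 : ℂ) * h
    have hrealk : ∀ k, (((S.coeff k).re : ℝ) : ℂ) = S.coeff k := by
      intro k
      have h := congrArg (fun p => Polynomial.coeff p k) (PolyInftyAux.normPoly_conj P w₀)
      simp only [Polynomial.coeff_map] at h
      exact Complex.conj_eq_iff_re.mp h
    set d := S.natDegree with hd
    set Q : Polynomial ℝ := ∑ m ∈ Finset.range (d + 1),
      Polynomial.C ((S.coeff (2 * m)).re) * Polynomial.X ^ m with hQdef
    have hQ : ∀ t : ℝ, ((Polynomial.eval (t ^ 2) Q : ℝ) : ℂ) = S.eval ((t : ℝ) : ℂ) := by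
      intro t
      have hev : S.eval ((t : ℝ) : ℂ)
          = ∑ k ∈ Finset.range (2 * (d + 1)), S.coeff k * ((t : ℝ) : ℂ) ^ k :=
        Polynomial.eval_eq_sum_range' (by omega) _
      rw [hev, PolyInftyAux.sum_range_two_mul]
      rw [hQdef, Polynomial.eval_finset_sum]
      push_cast
      refine Finset.sum_congr rfl fun m _ => ?_
      rw [hodd (2 * m + 1) ⟨m, by ring⟩, zero_mul, add_zero, Polynomial.eval_mul,
        Polynomial.eval_C, Polynomial.eval_pow, Polynomial.eval_X]
      push_cast
      rw [hrealk (2 * m), pow_mul]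
    have hQz : ∀ z : EuclideanSpace ℂ (Fin n),
        ‖evalPoly P z‖ ^ 2 = Polynomial.eval (‖z‖ ^ 2) Q := by
      intro z
      have h := (hQ ‖z‖).trans (hkey z).symm
      exact_mod_cast h.symm
    refine ⟨⟨Q, hQz⟩, fun s hs => ⟨Real.sqrt (Polynomial.eval (s ^ 2) Q), fun z hzs => ?_⟩⟩
    rw [show ‖evalPoly P z‖ = Real.sqrt (‖evalPoly P z‖ ^ 2) from
      (Real.sqrt_sq (norm_nonneg _)).symm, hQz z, hzs]
end

section
/- Let n ≥ 2 and 1 ≤ k < m. There exists N and a monomial (polynomial with monomial components) map p : ℂⁿ → ℂᴺ of degree m such that p maps exactly k zero-centered spheres into zero-centered spheres: p takes the spheres of radii r₁, …, r_k to zero-centered spheres, but ‖p(z)‖ is not constant on any other zero-centered sphere. -/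
open MvPolynomial Metric

lemma aux_prod_singles {α : Type*} [CommMonoid α] {n E : ℕ} (f : Fin E → Fin n) (g : Fin n → α) :
    ((∑ l, Finsupp.single (f l) (1:ℕ)).prod fun i e => g i ^ e) = ∏ l, g (f l) := by
  classical
  have H : ∀ s : Finset (Fin E),
      ((∑ l ∈ s, Finsupp.single (f l) (1:ℕ)).prod fun i e => g i ^ e) = ∏ l ∈ s, g (f l) := by
    intro s
    induction s using Finset.induction_on with
    | empty => simp
    | insert _ _ h ih =>
      rw [Finset.sum_insert h, Finset.prod_insert h,
        Finsupp.prod_add_index' (fun _ => pow_zero _) (fun _ _ _ => pow_add _ _ _), ih]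
      simp [Finsupp.prod_single_index]
  simpa using H Finset.univ

lemma aux_deg_singles {n E : ℕ} (f : Fin E → Fin n) :
    ((∑ l, Finsupp.single (f l) (1:ℕ)).sum fun _ e => e) = E := by
  classical
  have H : ∀ s : Finset (Fin E),
      ((∑ l ∈ s, Finsupp.single (f l) (1:ℕ)).sum fun _ e => e) = s.card := by
    intro s
    induction s using Finset.induction_on with
    | empty => simp
    | insert _ _ h ih =>
      rw [Finset.sum_insert h,
        Finsupp.sum_add_index' (fun _ => rfl) (fun _ _ _ => rfl), ih,
        Finsupp.sum_single_index rfl, Finset.card_insert_of_notMem h]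
      omega
  simpa using H Finset.univ

lemma aux_pow_sum {n E : ℕ} (x : Fin n → ℝ) :
    (∑ i, x i) ^ E = ∑ f : Fin E → Fin n, ∏ l, x (f l) := by
  classical
  rw [← Fintype.piFinset_univ, ← Finset.prod_univ_sum (fun _ => Finset.univ) (fun _ j => x j)]
  simp


set_option maxHeartbeats 1000000 in
/-- for `n ≥ 2` and `1 ≤ k < m` there is a monomial map of
degree `m` that takes the `k` given zero-centered spheres to zero-centered
spheres but no other zero-centered sphere to a zero-centered sphere. -/
theorem exists_monomial_exactly_k_fold {n : ℕ} (hn : 2 ≤ n) (k m : ℕ)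
    (hk : 1 ≤ k) (hkm : k < m)
    (r : Fin k → ℝ) (hrpos : ∀ j, 0 < r j) (hrinj : Function.Injective r) :
    ∃ (N : ℕ) (P : Fin N → MvPolynomial (Fin n) ℂ),
      (∀ i, ∃ (a : Fin n →₀ ℕ) (c : ℂ), P i = MvPolynomial.monomial a c) ∧
      (Finset.univ.sup (fun i => (P i).totalDegree) = m) ∧
      (∀ j : Fin k, ∃ R : ℝ, 0 < R ∧
        ∀ z : EuclideanSpace ℂ (Fin n), ‖z‖ = r j → ‖evalPoly P z‖ = R) ∧
      (∀ s : ℝ, 0 < s →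
        (∃ R : ℝ, ∀ z : EuclideanSpace ℂ (Fin n), ‖z‖ = s → ‖evalPoly P z‖ = R) →
        ∃ j : Fin k, r j = s) := by
  classical
  have h0n : 0 < n := by omega
  have h1n : 1 < n := by omega
  set i0 : Fin n := ⟨0, h0n⟩ with hi0
  set i1 : Fin n := ⟨1, h1n⟩ with hi1
  set q : Polynomial ℝ := ∏ j : Fin k, (Polynomial.X - Polynomial.C ((r j)^2)) with hq
  have hqdeg : q.natDegree < k + 1 := by
    have h1 := Polynomial.natDegree_prod_le (Finset.univ : Finset (Fin k))
      (fun j => Polynomial.X - Polynomial.C ((r j)^2))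
    rw [← hq] at h1
    simp only [Polynomial.natDegree_X_sub_C, Finset.sum_const, Finset.card_univ,
      Fintype.card_fin, smul_eq_mul, mul_one] at h1
    omega
  have hqeval : ∀ t : ℝ, q.eval t = ∏ j : Fin k, (t - (r j)^2) := by
    intro t; simp [hq, Polynomial.eval_prod]
  set M : ℝ := 1 + ∑ d ∈ Finset.range (k+1), |q.coeff d| with hM
  have hM0 : 0 < M := by
    have := Finset.sum_nonneg (fun d (_ : d ∈ Finset.range (k+1)) => abs_nonneg (q.coeff d))
    simp only [hM]; linarith
  set c : ℕ → Fin n → ℝ := fun d i => M + (if i = i0 then q.coeff d else 0) with hc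
  have hcpos : ∀ d, d < k + 1 → ∀ i, 0 < c d i := by
    intro d hd i
    have h2 : |q.coeff d| ≤ ∑ d' ∈ Finset.range (k+1), |q.coeff d'| :=
      Finset.single_le_sum (f := fun d' => |q.coeff d'|) (fun _ _ => abs_nonneg _)
        (Finset.mem_range.mpr hd)
    have h3 := neg_abs_le (q.coeff d)
    simp only [hc, hM]
    split <;> nlinarith [Finset.sum_nonneg
      (fun d' (_ : d' ∈ Finset.range (k+1)) => abs_nonneg (q.coeff d'))]
  let I : Type := Σ d : Fin (k+1), Fin n × (Fin (m - (k+1) + d.val) → Fin n)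
  let N := Fintype.card I
  let e : Fin N ≃ I := (Fintype.equivFin I).symm
  let expo : I → (Fin n →₀ ℕ) := fun σ =>
    Finsupp.single σ.2.1 1 + ∑ l, Finsupp.single (σ.2.2 l) 1
  let P : Fin N → MvPolynomial (Fin n) ℂ := fun i =>
    monomial (expo (e i)) ((Real.sqrt (c (e i).1.val (e i).2.1) : ℝ) : ℂ)
  -- key norm identity
  have key : ∀ z : EuclideanSpace ℂ (Fin n),
      ‖evalPoly P z‖^2 = ‖z i0‖^2 * (‖z‖^2)^(m-(k+1)) * q.eval (‖z‖^2)
        + M * ∑ d ∈ Finset.range (k+1), (‖z‖^2)^(m-(k+1)+d+1) := by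
    intro z
    have hxnn : ∀ i, (0:ℝ) ≤ ‖z i‖^2 := fun i => sq_nonneg _
    set x : Fin n → ℝ := fun i => ‖z i‖^2 with hx
    have ht : ‖z‖^2 = ∑ i, x i := by
      rw [EuclideanSpace.norm_eq, Real.sq_sqrt (Finset.sum_nonneg fun i _ => sq_nonneg _)]
    have hnorm : ‖evalPoly P z‖^2 = ∑ i, ‖evalPoly P z i‖^2 := by
      rw [EuclideanSpace.norm_eq, Real.sq_sqrt (Finset.sum_nonneg fun i _ => sq_nonneg _)]
    have hterm : ∀ σ : I, ‖MvPolynomial.eval (fun j => z j)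
        (monomial (expo σ) ((Real.sqrt (c σ.1.val σ.2.1) : ℝ):ℂ))‖^2
        = c σ.1.val σ.2.1 * (x σ.2.1 * ∏ l, x (σ.2.2 l)) := by
      intro σ
      rw [eval_monomial]
      have hprod : ((expo σ).prod fun i e => (fun j => z j) i ^ e)
          = z σ.2.1 * ∏ l, z (σ.2.2 l) := by
        show ((Finsupp.single σ.2.1 1 + ∑ l, Finsupp.single (σ.2.2 l) 1).prod
          fun i e => z i ^ e) = _
        rw [Finsupp.prod_add_index' (fun _ => pow_zero _) (fun _ _ _ => pow_add _ _ _),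
          aux_prod_singles]
        simp [Finsupp.prod_single_index]
      rw [hprod, norm_mul, norm_mul, norm_prod, mul_pow, mul_pow, ← Finset.prod_pow,
        Complex.norm_real, Real.norm_eq_abs, sq_abs,
        Real.sq_sqrt (hcpos _ σ.1.isLt σ.2.1).le]
    have main : ∑ i : Fin N, ‖evalPoly P z i‖^2
        = x i0 * ((∑ i, x i)^(m-(k+1)) * ∑ d ∈ Finset.range (k+1), q.coeff d * (∑ i, x i)^d)
          + M * ∑ d ∈ Finset.range (k+1), (∑ i, x i)^(m-(k+1)+d+1) := by
      calc ∑ i : Fin N, ‖evalPoly P z i‖^2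
          = ∑ σ : I, c σ.1.val σ.2.1 * (x σ.2.1 * ∏ l, x (σ.2.2 l)) := by
            rw [← Equiv.sum_comp e (fun σ => c σ.1.val σ.2.1 * (x σ.2.1 * ∏ l, x (σ.2.2 l)))]
            exact Finset.sum_congr rfl fun i _ => by refine Eq.trans ?_ (hterm (e i)); rfl
        _ = ∑ d : Fin (k+1), ∑ p : Fin n × (Fin (m-(k+1)+d.val) → Fin n),
              c d.val p.1 * (x p.1 * ∏ l, x (p.2 l)) := by
            rw [← Finset.univ_sigma_univ, Finset.sum_sigma]
        _ = ∑ d : Fin (k+1), (∑ j0 : Fin n, c d.val j0 * x j0) * (∑ i, x i)^(m-(k+1)+d.val) := by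
            refine Finset.sum_congr rfl fun d _ => ?_
            rw [Fintype.sum_prod_type, aux_pow_sum, Finset.sum_mul]
            refine Finset.sum_congr rfl fun j0 _ => ?_
            rw [Finset.mul_sum]
            exact Finset.sum_congr rfl fun f _ => by ring
        _ = ∑ d : Fin (k+1), (M * (∑ i, x i) + q.coeff d.val * x i0) * (∑ i, x i)^(m-(k+1)+d.val) := by
            refine Finset.sum_congr rfl fun d _ => ?_
            congr 1
            have h9 : ∑ j0 : Fin n, c d.val j0 * x j0
                = ∑ j0 : Fin n, (M * x j0 + (if j0 = i0 then q.coeff d.val * x j0 else 0)) := by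
              refine Finset.sum_congr rfl fun j0 _ => ?_
              simp only [hc]; split <;> ring
            rw [h9, Finset.sum_add_distrib, ← Finset.mul_sum,
              Finset.sum_ite_eq' Finset.univ i0 (fun j0 => q.coeff d.val * x j0)]
            simp
        _ = ∑ d ∈ Finset.range (k+1), (x i0 * ((∑ i, x i)^(m-(k+1)) * (q.coeff d * (∑ i, x i)^d))
              + M * (∑ i, x i)^(m-(k+1)+d+1)) := by
            rw [Fin.sum_univ_eq_sum_range
              (fun d => (M * (∑ i, x i) + q.coeff d * x i0) * (∑ i, x i)^(m-(k+1)+d))]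
            refine Finset.sum_congr rfl fun d _ => ?_
            rw [pow_add, pow_succ]
            ring
        _ = _ := by
            rw [Finset.sum_add_distrib, ← Finset.mul_sum, ← Finset.mul_sum, ← Finset.mul_sum]
    rw [hnorm, main, Polynomial.eval_eq_sum_range' hqdeg, ht]
    ring
  -- degrees
  have hdeg : ∀ i : Fin N, (P i).totalDegree = 1 + (m - (k+1) + (e i).1.val) := by
    intro i
    have hcne : ((Real.sqrt (c (e i).1.val (e i).2.1) : ℝ) : ℂ) ≠ 0 := by
      have := hcpos (e i).1.val (e i).1.isLt (e i).2.1
      simp [Complex.ofReal_eq_zero, Real.sqrt_eq_zero', not_le, this]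
    rw [show P i = monomial (expo (e i)) _ from rfl, totalDegree_monomial _ hcne]
    show (Finsupp.single (e i).2.1 1 + ∑ l, Finsupp.single ((e i).2.2 l) 1).sum (fun _ e => e) = _
    rw [Finsupp.sum_add_index' (fun _ => rfl) (fun _ _ _ => rfl),
      Finsupp.sum_single_index rfl, aux_deg_singles]
  refine ⟨N, P, fun i => ⟨expo (e i), _, rfl⟩, ?_, ?_, ?_⟩
  · -- sup of degrees = m
    apply le_antisymm
    · apply Finset.sup_le
      intro i _
      rw [hdeg i]
      have := (e i).1.is_le
      omega
    · let σ0 : I := ⟨⟨k, lt_add_one k⟩, (i0, fun _ => i0)⟩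
      have h4 : (P (e.symm σ0)).totalDegree = m := by
        rw [hdeg (e.symm σ0), Equiv.apply_symm_apply]
        show 1 + (m - (k+1) + k) = m
        omega
      calc m = (P (e.symm σ0)).totalDegree := h4.symm
        _ ≤ _ := Finset.le_sup (f := fun i => (P i).totalDegree) (Finset.mem_univ (e.symm σ0))
  · -- spheres r j map to spheres
    intro j
    refine ⟨Real.sqrt (M * ∑ d ∈ Finset.range (k+1), ((r j)^2)^(m-(k+1)+d+1)), ?_, ?_⟩
    · apply Real.sqrt_pos.mpr
      apply mul_pos hM0
      apply Finset.sum_pos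
      · intro d _
        have := (hrpos j).ne'
        positivity
      · exact ⟨0, Finset.mem_range.mpr (by omega)⟩
    · intro z hz
      have h5 := key z
      rw [hz] at h5
      have h6 : q.eval ((r j)^2) = 0 := by
        rw [hqeval]
        exact Finset.prod_eq_zero (Finset.mem_univ j) (by ring)
      rw [h6, mul_zero, zero_add] at h5
      have := congrArg Real.sqrt h5
      rwa [Real.sqrt_sq (norm_nonneg _)] at this
  · -- no other sphere
    intro s hs ⟨R, hR⟩
    have hne : i0 ≠ i1 := by
      simp [hi0, hi1, Fin.ext_iff]
    set za : EuclideanSpace ℂ (Fin n) := EuclideanSpace.single i0 (s:ℂ) with hza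
    set zb : EuclideanSpace ℂ (Fin n) := EuclideanSpace.single i1 (s:ℂ) with hzb
    have hna : ‖za‖ = s := by
      rw [hza, EuclideanSpace.norm_single, Complex.norm_real, Real.norm_eq_abs, abs_of_pos hs]
    have hnb : ‖zb‖ = s := by
      rw [hzb, EuclideanSpace.norm_single, Complex.norm_real, Real.norm_eq_abs, abs_of_pos hs]
    have hRa := hR za hna
    have hRb := hR zb hnb
    have hka := key za
    have hkb := key zb
    rw [hRa, hna] at hka
    rw [hRb, hnb] at hkb
    have hza0 : ‖za i0‖^2 = s^2 := by
      rw [hza]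
      simp [EuclideanSpace.single_apply, Complex.norm_real, Real.norm_eq_abs, sq_abs]
    have hzb0 : ‖zb i0‖^2 = 0 := by
      rw [hzb]
      simp [EuclideanSpace.single_apply, hne]
    rw [hza0] at hka
    rw [hzb0, zero_mul, zero_mul, zero_add] at hkb
    have h7 : s^2 * (s^2)^(m-(k+1)) * q.eval (s^2) = 0 := by linarith
    have h8 : q.eval (s^2) = 0 := by
      have hs2 : (0:ℝ) < s^2 := by positivity
      have hs3 : (0:ℝ) < (s^2)^(m-(k+1)) := by positivity
      rcases mul_eq_zero.mp h7 with h | h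
      · rcases mul_eq_zero.mp h with h' | h' <;> nlinarith
      · exact h
    rw [hqeval] at h8
    obtain ⟨j, _, hj⟩ := Finset.prod_eq_zero_iff.mp h8
    exact ⟨j, by nlinarith [hrpos j]⟩
end

section
/- (Huang's lemma application) Let n ≥ 2. Suppose q : ℂⁿ → ℂ is a polynomial homogeneous of degree ℓ and A(z, z̄) is a real polynomial such that −b·|q(z)|² = A(z, z̄)·‖z‖² identically, where b ≠ 0 is a real constant. Then q ≡ 0 and A ≡ 0. -/
open MvPolynomial Metric

lemma huangAux_eval_bind₁ {σ τ R : Type*} [CommSemiring R] (f : τ → R)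
    (g : σ → MvPolynomial τ R) (φ : MvPolynomial σ R) :
    eval f (bind₁ g φ) = eval (fun i => eval f (g i)) φ :=
  eval₂Hom_bind₁ _ _ _ _

lemma huangAux_vanish_real_fin : ∀ (m : ℕ) (Q : MvPolynomial (Fin m) ℂ),
    (∀ x : Fin m → ℝ, eval (fun i => (x i : ℂ)) Q = 0) → Q = 0 := by
  intro m
  induction m with
  | zero =>
    intro Q h
    apply MvPolynomial.funext (q := 0)
    intro x
    rw [map_zero]
    have hx : x = fun i => ((fun _ : Fin 0 => (0:ℝ)) i : ℂ) := by
      funext i; exact i.elim0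
    rw [hx]; exact h _
  | succ m ih =>
    intro Q h
    have hF : finSuccEquiv ℂ m Q = 0 := by
      apply Polynomial.ext; intro k
      rw [Polynomial.coeff_zero]
      apply ih
      intro y
      have hp : Polynomial.map (eval fun i => (y i : ℂ)) (finSuccEquiv ℂ m Q) = 0 := by
        apply Polynomial.eq_zero_of_infinite_isRoot
        apply (Set.infinite_range_of_injective Complex.ofReal_injective).mono
        rintro _ ⟨a, rfl⟩
        show Polynomial.IsRoot _ _
        rw [Polynomial.IsRoot, ← eval_eq_eval_mv_eval']
        have hc : (Fin.cons (a:ℂ) (fun i => (y i : ℂ)) : Fin (m+1) → ℂ)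
            = fun i => ((Fin.cons a y : Fin (m+1) → ℝ) i : ℂ) := by
          funext i
          refine Fin.cases ?_ ?_ i <;> simp
        rw [hc]; exact h _
      have := congrArg (fun p => Polynomial.coeff p k) hp
      simpa [Polynomial.coeff_map] using this
    have := congrArg (finSuccEquiv ℂ m).symm hF
    simpa using this

lemma huangAux_vanish_real_sum {n : ℕ} (Q : MvPolynomial (Fin n ⊕ Fin n) ℂ)
    (h : ∀ x : Fin n ⊕ Fin n → ℝ, eval (fun i => (x i : ℂ)) Q = 0) : Q = 0 := by
  have h1 : rename finSumFinEquiv Q = 0 := by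
    apply huangAux_vanish_real_fin
    intro x
    rw [eval_rename]
    exact h (x ∘ finSumFinEquiv)
  apply rename_injective (R := ℂ)
    (f := (finSumFinEquiv (m := n) (n := n) : Fin n ⊕ Fin n → Fin (n+n)))
    finSumFinEquiv.injective
  simpa using h1

lemma huangAux_vanish_diag {n : ℕ} (P : MvPolynomial (Fin n ⊕ Fin n) ℂ)
    (h : ∀ z : Fin n → ℂ,
      eval (Sum.elim z fun i => (starRingEnd ℂ) (z i)) P = 0) : P = 0 := by
  set f : Fin n ⊕ Fin n → MvPolynomial (Fin n ⊕ Fin n) ℂ :=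
    Sum.elim (fun j => X (Sum.inl j) + C Complex.I * X (Sum.inr j))
             (fun j => X (Sum.inl j) - C Complex.I * X (Sum.inr j)) with hf
  set g : Fin n ⊕ Fin n → MvPolynomial (Fin n ⊕ Fin n) ℂ :=
    Sum.elim (fun j => C (2⁻¹ : ℂ) * (X (Sum.inl j) + X (Sum.inr j)))
             (fun j => C (-Complex.I/2) * (X (Sum.inl j) - X (Sum.inr j))) with hg
  have hQ : bind₁ f P = 0 := by
    apply huangAux_vanish_real_sum
    intro x
    rw [huangAux_eval_bind₁]
    have h1 := h (fun j => (x (Sum.inl j) : ℂ) + Complex.I * (x (Sum.inr j)))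
    have hpt : (fun i => eval (fun i => (x i : ℂ)) (f i))
        = Sum.elim (fun j => (x (Sum.inl j) : ℂ) + Complex.I * (x (Sum.inr j)))
            (fun j => (starRingEnd ℂ) ((x (Sum.inl j) : ℂ) + Complex.I * (x (Sum.inr j)))) := by
      funext i
      cases i with
      | inl j => simp [hf]
      | inr j =>
        simp [hf, map_add, map_mul, Complex.conj_ofReal, Complex.conj_I]
        ring
    rw [hpt]; exact h1
  have hCI : (C Complex.I : MvPolynomial (Fin n ⊕ Fin n) ℂ) * C (-Complex.I/2) = C (2⁻¹:ℂ) := by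
    rw [← C_mul]; congr 1; linear_combination (-1/2 : ℂ) * Complex.I_mul_I
  have htwo : (C (2⁻¹:ℂ) : MvPolynomial (Fin n ⊕ Fin n) ℂ) * 2 = 1 := by
    have h2 : (2 : MvPolynomial (Fin n ⊕ Fin n) ℂ) = C 2 := by
      rw [map_ofNat]
    rw [h2, ← C_mul]
    norm_num
  have hcomp : bind₁ g (bind₁ f P) = P := by
    rw [bind₁_bind₁]
    have hX : (fun i => bind₁ g (f i)) = (X : Fin n ⊕ Fin n → MvPolynomial (Fin n ⊕ Fin n) ℂ) := by
      funext i
      cases i with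
      | inl j =>
        simp only [hf, hg, Sum.elim_inl, Sum.elim_inr, map_add, map_mul, map_sub,
          bind₁_X_right, bind₁_C_right]
        rw [← mul_assoc, hCI, ← mul_add]
        rw [show (X (Sum.inl j) + X (Sum.inr j) + (X (Sum.inl j) - X (Sum.inr j)) :
          MvPolynomial (Fin n ⊕ Fin n) ℂ) = 2 * X (Sum.inl j) by ring]
        rw [← mul_assoc, htwo, one_mul]
      | inr j =>
        simp only [hf, hg, Sum.elim_inl, Sum.elim_inr, map_add, map_mul, map_sub,
          bind₁_X_right, bind₁_C_right]
        rw [← mul_assoc, hCI, ← mul_sub]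
        rw [show (X (Sum.inl j) + X (Sum.inr j) - (X (Sum.inl j) - X (Sum.inr j)) :
          MvPolynomial (Fin n ⊕ Fin n) ℂ) = 2 * X (Sum.inr j) by ring]
        rw [← mul_assoc, htwo, one_mul]
    rw [hX, bind₁_X_left]
    rfl
  rw [hQ, map_zero] at hcomp
  exact hcomp.symm

/-- application of Huang's lemma: for `n ≥ 2`, if `q` is a
homogeneous polynomial of degree `ℓ` and `A(z, z̄)` a real polynomial with
`−b·|q(z)|² = A(z, z̄)·‖z‖²` identically for a real constant `b ≠ 0`, then
`q ≡ 0` and `A ≡ 0`. -/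
theorem huang_lemma_application {n : ℕ} (hn : 2 ≤ n) (ℓ : ℕ)
    (q : MvPolynomial (Fin n) ℂ) (hq : q.IsHomogeneous ℓ)
    (A : MvPolynomial (Fin n ⊕ Fin n) ℂ)
    (hAreal : ∀ z : EuclideanSpace ℂ (Fin n), (evalRP A z).im = 0)
    (b : ℝ) (hb : b ≠ 0)
    (hid : ∀ z : EuclideanSpace ℂ (Fin n),
      -b * ‖MvPolynomial.eval (fun i => z i) q‖ ^ 2 =
        (evalRP A z).re * ‖z‖ ^ 2) :
    q = 0 ∧ ∀ z : EuclideanSpace ℂ (Fin n), evalRP A z = 0 := by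
  classical
  set cq : MvPolynomial (Fin n) ℂ := MvPolynomial.map (starRingEnd ℂ) q with hcq
  have hconj : ∀ w : Fin n → ℂ,
      eval w cq = (starRingEnd ℂ) (eval (fun i => (starRingEnd ℂ) (w i)) q) := by
    intro w
    rw [hcq, eval_map]
    have h2 := eval₂_comp_left ((starRingEnd ℂ) : ℂ →+* ℂ) (RingHom.id ℂ)
      (fun i => (starRingEnd ℂ) (w i)) q
    rw [show eval (fun i => (starRingEnd ℂ) (w i)) q
        = eval₂ (RingHom.id ℂ) (fun i => (starRingEnd ℂ) (w i)) q from rfl, h2]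
    congr 1
    funext i; simp
  set s : MvPolynomial (Fin n ⊕ Fin n) ℂ :=
    ∑ j : Fin n, X (Sum.inl j) * X (Sum.inr j) with hs
  set P : MvPolynomial (Fin n ⊕ Fin n) ℂ :=
    C (-(b:ℂ)) * (rename Sum.inl q * rename Sum.inr cq) - A * s with hP
  have hns : ∀ w : ℂ, w * (starRingEnd ℂ) w = ((‖w‖^2 : ℝ) : ℂ) := fun w => by
    rw [Complex.mul_conj, Complex.sq_norm]
  have hPdiag : ∀ z : Fin n → ℂ,
      eval (Sum.elim z fun i => (starRingEnd ℂ) (z i)) P = 0 := by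
    have key : ∀ z : EuclideanSpace ℂ (Fin n),
        eval (Sum.elim (fun i => z i) fun i => (starRingEnd ℂ) (z i)) P = 0 := by
      intro z
      have hzid := hid z
      have hzre : evalRP A z = (((evalRP A z).re : ℝ) : ℂ) := by
        apply Complex.ext
        · simp
        · simp [hAreal _]
      have hsum : ‖z‖^2 = ∑ j, ‖z j‖^2 := by
        rw [EuclideanSpace.norm_eq, Real.sq_sqrt]
        positivity
      rw [hP]
      simp only [map_sub, map_mul]
      rw [eval_C, eval_rename, eval_rename]
      have e1 : (Sum.elim (fun i => z i) fun i => (starRingEnd ℂ) (z i)) ∘ Sum.inl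
          = fun i => z i := rfl
      have e2 : (Sum.elim (fun i => z i) fun i => (starRingEnd ℂ) (z i)) ∘ Sum.inr
          = fun i => (starRingEnd ℂ) (z i) := rfl
      rw [e1, e2, hconj]
      have e3 : (fun i => (starRingEnd ℂ) ((starRingEnd ℂ) (z i))) = fun i => z i := by
        funext i; simp
      rw [e3]
      have e4 : eval (Sum.elim (fun i => z i) fun i => (starRingEnd ℂ) (z i)) A
          = evalRP A z := rfl
      have e5 : eval (Sum.elim (fun i => z i) fun i => (starRingEnd ℂ) (z i)) s
          = ((∑ j, ‖z j‖^2 : ℝ) : ℂ) := by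
        rw [hs, map_sum, Complex.ofReal_sum]
        apply Finset.sum_congr rfl
        intro j _
        rw [eval_mul, eval_X, eval_X, Sum.elim_inl, Sum.elim_inr, hns]
      rw [e4, e5, hzre, hns, ← hsum]
      have hc := congrArg (fun r : ℝ => (r : ℂ)) hzid
      push_cast at hc
      push_cast
      linear_combination hc
    intro z
    exact key (WithLp.toLp 2 z)
  have hP0 : P = 0 := huangAux_vanish_diag P hPdiag
  have hpol : ∀ z w : Fin n → ℂ,
      (-(b:ℂ)) * (eval z q * eval w cq)
        = eval (Sum.elim z w) A * ∑ j, z j * w j := by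
    intro z w
    have h3 := congrArg (eval (Sum.elim z w)) hP0
    rw [hP] at h3
    simp only [map_sub, map_mul, map_sum] at h3
    rw [eval_C, eval_rename, eval_rename, hs, map_sum, map_zero] at h3
    have e6 : ∑ j, eval (Sum.elim z w) (X (Sum.inl j) * X (Sum.inr j))
        = ∑ j, z j * w j := by
      apply Finset.sum_congr rfl
      intro j _
      rw [eval_mul, eval_X, eval_X, Sum.elim_inl, Sum.elim_inr]
    rw [e6] at h3
    have e7 : (Sum.elim z w) ∘ Sum.inl = z := rfl
    have e8 : (Sum.elim z w) ∘ Sum.inr = w := rfl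
    rw [e7, e8] at h3
    linear_combination h3
  have h0 : 0 < n := by omega
  have h1 : 1 < n := by omega
  set i0 : Fin n := ⟨0, h0⟩ with hi0
  set i1 : Fin n := ⟨1, h1⟩ with hi1
  have hne : i1 ≠ i0 := by simp [hi0, hi1, Fin.ext_iff]
  have hbC : (-(b:ℂ)) ≠ 0 := by
    simpa using Complex.ofReal_ne_zero.mpr hb
  have hq0 : q = 0 := by
    set W : Fin n → MvPolynomial (Fin n ⊕ (Fin n ⊕ Fin n)) ℂ := fun j =>
      (∑ i : Fin n, X (Sum.inl i) * X (Sum.inr (Sum.inl i))) * X (Sum.inr (Sum.inr j))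
      - (∑ i : Fin n, X (Sum.inl i) * X (Sum.inr (Sum.inr i))) * X (Sum.inr (Sum.inl j)) with hW
    have hprod : rename Sum.inl q * bind₁ W cq = 0 := by
      apply MvPolynomial.funext (q := 0)
      intro x
      rw [map_zero, eval_mul, eval_rename, huangAux_eval_bind₁]
      set z : Fin n → ℂ := x ∘ Sum.inl with hz
      set u : Fin n → ℂ := fun i => x (Sum.inr (Sum.inl i)) with hu
      set v : Fin n → ℂ := fun i => x (Sum.inr (Sum.inr i)) with hv
      set w : Fin n → ℂ :=
        fun j => (∑ i, z i * u i) * v j - (∑ i, z i * v i) * u j with hw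
      have hWe : (fun j => eval x (W j)) = w := by
        funext j
        rw [hW, hw]
        simp only [map_sub, map_mul, map_sum, eval_X]
        rfl
      rw [hWe]
      have hzw : ∑ j, z j * w j = 0 := by
        have e9 : ∀ j : Fin n, z j * w j
            = (∑ i, z i * u i) * (z j * v j) - (∑ i, z i * v i) * (z j * u j) := by
          intro j; rw [hw]; ring
        rw [Finset.sum_congr rfl (fun j _ => e9 j), Finset.sum_sub_distrib,
          ← Finset.mul_sum, ← Finset.mul_sum]
        ring
      have h4 := hpol z w
      rw [hzw, mul_zero] at h4
      exact (mul_eq_zero.mp h4).resolve_left hbC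
    rcases mul_eq_zero.mp hprod with h5 | h5
    · apply rename_injective (R := ℂ) Sum.inl Sum.inl_injective
      simpa using h5
    · have hcqall : ∀ y : Fin n → ℂ, eval y cq = 0 := by
        intro y
        obtain ⟨z, u, hzy, hzu⟩ : ∃ z u : Fin n → ℂ,
            (∑ j, z j * y j) = 0 ∧ (∑ j, z j * u j) = 1 := by
          by_cases hy : y i0 = 0
          · refine ⟨fun j => if j = i0 then 1 else 0, fun j => if j = i0 then 1 else 0, ?_, ?_⟩
            · simp [ite_mul, Finset.sum_ite_eq', hy]
            · simp [ite_mul, Finset.sum_ite_eq']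
          · refine ⟨fun j => (if j = i1 then 1 else 0) + (if j = i0 then -(y i1)/(y i0) else 0),
              fun j => if j = i1 then 1 else 0, ?_, ?_⟩
            · simp only [add_mul, Finset.sum_add_distrib, ite_mul, one_mul, zero_mul,
                Finset.sum_ite_eq', Finset.mem_univ, if_true]
              field_simp
              ring
            · simp only [mul_ite, mul_one, mul_zero, Finset.sum_ite_eq, Finset.sum_ite_eq',
                Finset.mem_univ, if_true, add_mul, Finset.sum_add_distrib, ite_mul,
                one_mul, zero_mul]
              simp [hne]
        have h6 := congrArg (eval (Sum.elim z (Sum.elim u y))) h5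
        rw [map_zero, huangAux_eval_bind₁] at h6
        have hWy : (fun j => eval (Sum.elim z (Sum.elim u y)) (W j)) = y := by
          funext j
          rw [hW]
          simp only [map_sub, map_mul, map_sum, eval_X, Sum.elim_inl, Sum.elim_inr]
          rw [hzu, hzy]
          ring
        rw [hWy] at h6
        exact h6
      have hcq0 : cq = 0 := by
        apply MvPolynomial.funext (q := 0)
        intro x
        rw [map_zero]
        exact hcqall x
      apply MvPolynomial.map_injective (starRingEnd ℂ) (RingHom.injective _)
      rw [← hcq, hcq0, map_zero]
  have hA0 : A = 0 := by
    have hAs : A * s = 0 := by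
      have h7 := hP0
      rw [hP, hq0, map_zero, zero_mul, mul_zero, zero_sub, neg_eq_zero] at h7
      exact h7
    rcases mul_eq_zero.mp hAs with h8 | h8
    · exact h8
    · exfalso
      have h9 := congrArg (eval (Sum.elim (fun j => if j = i0 then (1:ℂ) else 0)
        (fun j => if j = i0 then (1:ℂ) else 0))) h8
      rw [map_zero, hs, map_sum] at h9
      simp only [eval_mul, eval_X, Sum.elim_inl, Sum.elim_inr, ite_mul, one_mul, zero_mul,
        mul_ite, mul_one, mul_zero, Finset.sum_ite_eq', Finset.mem_univ, if_true] at h9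
      simp at h9
  refine ⟨hq0, fun z => ?_⟩
  rw [hA0]
  simp [evalRP]
end
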